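/- arXiv:2110.12476 — 9 statements merged into one kernel-verified Lean document; each statement's English description precedes it below -/
import Mathlib

section
/- Let α ∈ [0,1] be a real number, let G be a simple graph with vertex set {v_1, …, v_n} (n ≥ 3), and for each i = 1, …, n let G_i be an r_i-regular simple graph on n_i vertices. Put α_i = Σ_{j : v_j ∈ N_G(v_i)} n_j (the sum of the orders of the graphs G_j placed on the neighbours of v_i in G), and let H = G[G_1, …, G_n] be the joined union. If λ is an eigenvalue of the adjacency matrix A(G_i) that admits an eigenvector whose coordinates sum to zero, then α(r_i + α_i) + (1−α)λ is an eigenvalue of the generalized adjacency matrix A_α(H). -/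
open Matrix Polynomial BigOperators

/-- The generalized adjacency matrix `A_α(G) = α·D(G) + (1−α)·A(G)`. -/
noncomputable def Aalpha {V : Type*} [Fintype V] (G : SimpleGraph V) (α : ℝ) :
    Matrix V V ℝ :=
  letI := Classical.decEq V
  letI := Classical.decRel G.Adj
  α • Matrix.diagonal (fun v => (G.degree v : ℝ)) + (1 - α) • G.adjMatrix ℝ

/-- `μ` is an eigenvalue of the real matrix `M`. -/
def Matrix.IsEigenvalue {n : Type*} [Fintype n] (M : Matrix n n ℝ) (μ : ℝ) : Prop :=
  ∃ v : n → ℝ, v ≠ 0 ∧ M.mulVec v = μ • v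

/-- The dimension of the eigenspace of a real matrix `M` for the value `μ`. -/
noncomputable def eigMult {n : Type*} [Fintype n] (M : Matrix n n ℝ) (μ : ℝ) : ℕ :=
  letI := Classical.decEq n
  Module.finrank ℝ (Module.End.eigenspace (Matrix.toLin' M) μ)

/-- The joined union `G[G_1, …, G_n]`. -/
def joinedUnion {n : ℕ} (G : SimpleGraph (Fin n)) (V : Fin n → Type*)
    (Gs : ∀ i, SimpleGraph (V i)) : SimpleGraph (Σ i, V i) :=
  SimpleGraph.fromRel (fun x y =>
    if h : x.1 = y.1 then (Gs y.1).Adj (h ▸ x.2) y.2 else G.Adj x.1 y.1)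

/-- The join `G ∇ H` of two graphs. -/
def graphJoin {V W : Type*} (G : SimpleGraph V) (H : SimpleGraph W) :
    SimpleGraph (V ⊕ W) :=
  SimpleGraph.fromRel (fun x y =>
    match x, y with
    | Sum.inl a, Sum.inl b => G.Adj a b
    | Sum.inr a, Sum.inr b => H.Adj a b
    | _, _ => True)

/-- The disjoint union `G ∪ H` of two graphs. -/
def disjUnion {V W : Type*} (G : SimpleGraph V) (H : SimpleGraph W) :
    SimpleGraph (V ⊕ W) :=
  SimpleGraph.fromRel (fun x y =>
    match x, y with
    | Sum.inl a, Sum.inl b => G.Adj a b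
    | Sum.inr a, Sum.inr b => H.Adj a b
    | _, _ => False)

/-- Degree of a vertex (classical version). -/
noncomputable def gdegree {V : Type*} [Fintype V] (G : SimpleGraph V) (v : V) : ℕ :=
  letI := Classical.decEq V
  letI := Classical.decRel G.Adj
  G.degree v

/-- The power graph of a group. -/
def powerGraph (G : Type*) [Group G] : SimpleGraph G :=
  SimpleGraph.fromRel (fun x y => ∃ k : ℕ, 0 < k ∧ y = x ^ k)

lemma ju_adj_same {n : ℕ} (G : SimpleGraph (Fin n)) (V : Fin n → Type*)
    (Gs : ∀ i, SimpleGraph (V i)) (i : Fin n) (a b : V i) :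
    (joinedUnion G V Gs).Adj ⟨i, a⟩ ⟨i, b⟩ ↔ (Gs i).Adj a b := by
  rw [joinedUnion, SimpleGraph.fromRel_adj]
  constructor
  · rintro ⟨hne, h | h⟩ <;> rw [dif_pos rfl] at h
    · exact h
    · exact h.symm
  · intro h
    refine ⟨?_, Or.inl ?_⟩
    · intro he
      have hab : a = b := eq_of_heq (Sigma.mk.inj_iff.mp he).2
      exact (Gs i).irrefl (hab ▸ h)
    · rw [dif_pos rfl]; exact h

lemma ju_adj_diff {n : ℕ} (G : SimpleGraph (Fin n)) (V : Fin n → Type*)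
    (Gs : ∀ i, SimpleGraph (V i)) {j k : Fin n} (hjk : j ≠ k) (a : V j) (b : V k) :
    (joinedUnion G V Gs).Adj ⟨j, a⟩ ⟨k, b⟩ ↔ G.Adj j k := by
  rw [joinedUnion, SimpleGraph.fromRel_adj]
  constructor
  · rintro ⟨hne, h | h⟩
    · rw [dif_neg hjk] at h; exact h
    · rw [dif_neg (Ne.symm hjk)] at h; exact h.symm
  · intro h
    refine ⟨?_, Or.inl ?_⟩
    · intro he; exact hjk (congrArg Sigma.fst he)
    · rw [dif_neg hjk]; exact h

lemma ju_degree {n : ℕ} (G : SimpleGraph (Fin n)) [DecidableRel G.Adj]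
    (V : Fin n → Type) [∀ i, Fintype (V i)]
    (Gs : ∀ i, SimpleGraph (V i)) [∀ i, DecidableRel (Gs i).Adj]
    [DecidableRel (joinedUnion G V Gs).Adj]
    (i : Fin n) (w : V i) :
    (joinedUnion G V Gs).degree ⟨i, w⟩ =
      (Gs i).degree w + ∑ j ∈ G.neighborFinset i, Fintype.card (V j) := by
  classical
  rw [SimpleGraph.degree, SimpleGraph.neighborFinset_eq_filter, Finset.card_filter]
  rw [← Finset.univ_sigma_univ, Finset.sum_sigma]
  rw [← Finset.add_sum_erase _ _ (Finset.mem_univ i)]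
  congr 1
  · rw [SimpleGraph.degree, SimpleGraph.neighborFinset_eq_filter, Finset.card_filter]
    exact Finset.sum_congr rfl fun b _ => by simp only [ju_adj_same]
  · rw [show G.neighborFinset i = (Finset.univ.erase i).filter (G.Adj i) by
      ext k
      simp only [SimpleGraph.mem_neighborFinset, Finset.mem_filter, Finset.mem_erase,
        Finset.mem_univ, true_and, and_true]
      exact ⟨fun h => ⟨h.ne', h⟩, fun h => h.2⟩]
    rw [Finset.sum_filter]
    refine Finset.sum_congr rfl fun k hk => ?_
    have hik : i ≠ k := fun h => (Finset.mem_erase.mp hk).1 h.symm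
    have : ∀ b : V k, (joinedUnion G V Gs).Adj ⟨i, w⟩ ⟨k, b⟩ ↔ G.Adj i k :=
      fun b => ju_adj_diff G V Gs hik w b
    by_cases h : G.Adj i k
    · simp [this, h, Finset.card_univ]
    · simp [this, h]

/-- eigenvalues of the joined union coming from eigenvectors of the
components whose coordinates sum to zero. -/
theorem stmt_0 {α : ℝ} (hα : α ∈ Set.Icc (0 : ℝ) 1)
    {n : ℕ} (hn : 3 ≤ n) (G : SimpleGraph (Fin n)) [DecidableRel G.Adj]
    (V : Fin n → Type) [∀ i, Fintype (V i)]
    (Gs : ∀ i, SimpleGraph (V i)) [∀ i, DecidableRel (Gs i).Adj]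
    (r : Fin n → ℕ) (hreg : ∀ i, (Gs i).IsRegularOfDegree (r i))
    (i : Fin n) (lam : ℝ) (x : V i → ℝ) (hx : x ≠ 0)
    (hev : (Gs i).adjMatrix ℝ *ᵥ x = lam • x)
    (hsum : ∑ u, x u = 0) :
    Matrix.IsEigenvalue (Aalpha (joinedUnion G V Gs) α)
      (α * ((r i : ℝ) + ∑ j ∈ G.neighborFinset i, (Fintype.card (V j) : ℝ))
        + (1 - α) * lam) := by
  classical
  set H := joinedUnion G V Gs with hH
  set μ := α * ((r i : ℝ) + ∑ j ∈ G.neighborFinset i, (Fintype.card (V j) : ℝ))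
      + (1 - α) * lam with hμ
  -- the lifted vector
  set y : (Σ k, V k) → ℝ := fun s => if h : s.1 = i then x (h ▸ s.2) else 0 with hy
  have hyi : ∀ b : V i, y ⟨i, b⟩ = x b := fun b => by simp [hy]
  have hyne : ∀ {k : Fin n}, k ≠ i → ∀ b : V k, y ⟨k, b⟩ = 0 := fun {k} hk b => by
    simp [hy, hk]
  refine ⟨y, ?_, ?_⟩
  · obtain ⟨u, hu⟩ := Function.ne_iff.mp hx
    intro h0
    exact hu (by rw [← hyi u, h0]; rfl)
  · funext s
    obtain ⟨j, w⟩ := s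
    -- the adjacency sum
    have hadj : (H.adjMatrix ℝ *ᵥ y) ⟨j, w⟩
        = ∑ b : V i, if H.Adj ⟨j, w⟩ ⟨i, b⟩ then x b else 0 := by
      rw [SimpleGraph.adjMatrix_mulVec_apply, SimpleGraph.neighborFinset_eq_filter,
        Finset.sum_filter, ← Finset.univ_sigma_univ, Finset.sum_sigma]
      rw [Finset.sum_eq_single i]
      · exact Finset.sum_congr rfl fun b _ => by rw [hyi]
      · intro k _ hk
        exact Finset.sum_eq_zero fun b _ => by rw [hyne hk]; simp
      · exact fun h => absurd (Finset.mem_univ i) h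
    by_cases hj : j = i
    · subst hj
      have hadj2 : (H.adjMatrix ℝ *ᵥ y) ⟨j, w⟩ = lam * x w := by
        rw [hadj]
        have : ∀ b : V j, (if H.Adj ⟨j, w⟩ ⟨j, b⟩ then x b else (0:ℝ))
            = if (Gs j).Adj w b then x b else 0 := fun b => by
          simp only [hH, ju_adj_same]
        rw [Finset.sum_congr rfl fun b _ => this b]
        have := congrFun hev w
        rw [SimpleGraph.adjMatrix_mulVec_apply, SimpleGraph.neighborFinset_eq_filter,
          Finset.sum_filter] at this
        rw [this]; rfl
      have hdeg : (H.degree (⟨j, w⟩ : Σ k, V k) : ℝ)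
          = (r j : ℝ) + ∑ k ∈ G.neighborFinset j, (Fintype.card (V k) : ℝ) := by
        rw [ju_degree, hreg j w]
        push_cast
        ring
      simp only [Aalpha, Matrix.add_mulVec, Matrix.smul_mulVec, Pi.add_apply,
        Pi.smul_apply, Matrix.mulVec_diagonal, smul_eq_mul]
      rw [hadj2]
      rw [show ((joinedUnion G V Gs).degree ⟨j, w⟩ : ℝ) = (H.degree ⟨j, w⟩ : ℝ) from rfl]
      rw [hdeg, hyi, hμ]
      ring
    · have hadj2 : (H.adjMatrix ℝ *ᵥ y) ⟨j, w⟩ = 0 := by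
        rw [hadj]
        have : ∀ b : V i, (if H.Adj ⟨j, w⟩ ⟨i, b⟩ then x b else (0:ℝ))
            = if G.Adj j i then x b else 0 := fun b => by
          simp only [hH, ju_adj_diff G V Gs hj]
        rw [Finset.sum_congr rfl fun b _ => this b]
        by_cases h : G.Adj j i <;> simp [h, hsum]
      simp only [Aalpha, Matrix.add_mulVec, Matrix.smul_mulVec, Pi.add_apply,
        Pi.smul_apply, Matrix.mulVec_diagonal, smul_eq_mul]
      rw [hadj2, hyne hj]
      ring
end

section
/- Let α ∈ [0,1] be a real number, let G be a simple graph with vertex set {v_1, …, v_n} (n ≥ 3), and let H = G[K_{p_1}, …, K_{p_n}] be the joined union in which the complete graph K_{p_i} (p_i ≥ 1) is placed on the vertex v_i. Put α_i = Σ_{j : v_j ∈ N_G(v_i)} p_j. Then for every i with p_i ≥ 2, the number α·p_i − 1 + α·α_i is an eigenvalue of A_α(H) whose eigenspace has dimension at least p_i − 1. -/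
open Matrix Polynomial BigOperators

/-! Two vertices in the same clique block of `G[K_{p_1}, …, K_{p_n}]` are adjacent twins: they have
the same degree `p_i - 1 + α_i` and the same neighbours outside `{x, y}`. For such a pair the
columns of the symmetric matrix `A_α` agree off `{x, y}`, so `e_x - e_y` is an eigenvector with
eigenvalue `A_α x x - A_α x y = α (p_i - 1 + α_i) - (1 - α)`. Fixing one vertex `a` of the block,
the `p_i - 1` vectors `e_b - e_a` are linearly independent. -/

open Function

theorem Matrix.IsSymm.mulVec_single_sub_single {V R : Type*} [Fintype V] [DecidableEq V]
    [CommRing R] {M : Matrix V V R} (hM : M.IsSymm) {x y : V} (hxy : x ≠ y)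
    (hcol : ∀ z, z ≠ x → z ≠ y → M z x = M z y) (hdiag : M y y = M x x) :
    M *ᵥ (Pi.single x 1 - Pi.single y 1) = (M x x - M x y) • (Pi.single x 1 - Pi.single y 1) := by
  ext z
  rw [mulVec_sub, mulVec_single_one, mulVec_single_one]
  by_cases hzx : z = x
  · subst hzx; simp [hxy]
  by_cases hzy : z = y
  · subst hzy; simp [hzx, hdiag, hM.apply x z]
  simp [hzx, hzy, hcol z hzx hzy]

theorem linearIndependent_single_sub_single {R V ι : Type*} [CommRing R] [DecidableEq V]
    [Finite ι] {f : ι → V} (hf : Injective f) (a : ι) :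
    LinearIndependent R fun b : {b // b ≠ a} => (Pi.single (f b) 1 - Pi.single (f a) 1 : V → R) := by
  classical
  refine LinearIndependent.of_comp (LinearMap.funLeft R R (f ∘ ((↑) : {b // b ≠ a} → ι))) ?_
  convert (Pi.basisFun R {b // b ≠ a}).linearIndependent using 1
  ext b c
  simp [LinearMap.funLeft_apply, Pi.single_apply, hf.eq_iff, c.2.symm, Subtype.ext_iff]

theorem card_le_eigMult {V ι : Type*} [Fintype V] [Fintype ι] {M : Matrix V V ℝ} {μ : ℝ}
    {v : ι → V → ℝ} (hv : LinearIndependent ℝ v) (heig : ∀ b, M *ᵥ v b = μ • v b) :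
    Fintype.card ι ≤ eigMult M μ := by
  let := Classical.decEq V
  have hmem : ∀ b, v b ∈ Module.End.eigenspace (toLin' M) μ := fun b => by
    rw [Module.End.mem_eigenspace_iff, toLin'_apply, heig]
  exact (LinearIndependent.of_comp (Submodule.subtype _)
    (v := fun b => (⟨v b, hmem b⟩ : Module.End.eigenspace (toLin' M) μ)) hv).fintype_card_le_finrank

section Aalpha

variable {V : Type*} [Fintype V] [DecidableEq V] (H : SimpleGraph V) [DecidableRel H.Adj] (α : ℝ)

theorem Aalpha_eq :
    Aalpha H α = α • diagonal (fun v => (H.degree v : ℝ)) + (1 - α) • H.adjMatrix ℝ := by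
  unfold Aalpha
  congr!

theorem Aalpha_isSymm : (Aalpha H α).IsSymm := by
  rw [Aalpha_eq]
  exact ((isSymm_diagonal _).smul _).add ((H.isSymm_adjMatrix).smul _)

theorem Aalpha_apply_self (v : V) : Aalpha H α v v = α * H.degree v := by
  simp [Aalpha_eq]

theorem Aalpha_apply_of_ne {v w : V} (h : v ≠ w) :
    Aalpha H α v w = if H.Adj v w then 1 - α else 0 := by
  simp [Aalpha_eq, h]

end Aalpha

section JoinedUnion

variable {n : ℕ} (G : SimpleGraph (Fin n))

theorem joinedUnion_adj_mk_mk_self {V : Fin n → Type*} (Gs : ∀ i, SimpleGraph (V i)) (j : Fin n)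
    (b c : V j) : (joinedUnion G V Gs).Adj ⟨j, b⟩ ⟨j, c⟩ ↔ (Gs j).Adj b c := by
  simp only [joinedUnion, SimpleGraph.fromRel_adj, dite_true, ne_eq, Sigma.mk.injEq, heq_eq_eq,
    true_and]
  constructor
  · rintro ⟨-, h | h⟩
    exacts [h, h.symm]
  · intro h
    exact ⟨h.ne, Or.inl h⟩

theorem joinedUnion_adj_mk_mk_of_ne {V : Fin n → Type*} (Gs : ∀ i, SimpleGraph (V i))
    {j k : Fin n} (h : j ≠ k) (b : V j) (c : V k) :
    (joinedUnion G V Gs).Adj ⟨j, b⟩ ⟨k, c⟩ ↔ G.Adj j k := by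
  simp [joinedUnion, h, h.symm, G.adj_comm k j]

variable (p : Fin n → ℕ)

theorem joinedUnion_top_adj_iff_of_mem_block {i : Fin n} {a b : Fin (p i)} {z : Σ j, Fin (p j)}
    (hza : z ≠ ⟨i, a⟩) (hzb : z ≠ ⟨i, b⟩) :
    (joinedUnion G (fun j => Fin (p j)) (fun _ => ⊤)).Adj z ⟨i, a⟩ ↔
      (joinedUnion G (fun j => Fin (p j)) (fun _ => ⊤)).Adj z ⟨i, b⟩ := by
  obtain ⟨k, c⟩ := z
  by_cases hki : k = i
  · subst hki
    simp_all [joinedUnion_adj_mk_mk_self]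
  · simp [joinedUnion_adj_mk_mk_of_ne, hki]

theorem joinedUnion_top_degree [DecidableRel G.Adj]
    [DecidableRel (joinedUnion G (fun j => Fin (p j)) (fun _ => ⊤)).Adj] (x : Σ j, Fin (p j)) :
    (joinedUnion G (fun j => Fin (p j)) (fun _ => ⊤)).degree x =
      p x.1 - 1 + ∑ j ∈ G.neighborFinset x.1, p j := by
  obtain ⟨i, a⟩ := x
  have hblock : ∀ j, ∑ c : Fin (p j),
      (if (joinedUnion G (fun j => Fin (p j)) (fun _ => ⊤)).Adj ⟨i, a⟩ ⟨j, c⟩ then 1 else 0) =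
      (if i = j then p i - 1 else 0) + if G.Adj i j then p j else 0 := by
    intro j
    by_cases hij : i = j
    · subst hij
      simp [joinedUnion_adj_mk_mk_self, Finset.sum_ite, Finset.filter_ne]
    · simp [joinedUnion_adj_mk_mk_of_ne _ _ hij, hij]
  rw [← SimpleGraph.card_neighborFinset_eq_degree, SimpleGraph.neighborFinset_eq_filter,
    Finset.card_filter, Fintype.sum_sigma, Finset.sum_congr rfl fun j _ => hblock j,
    Finset.sum_add_distrib, Finset.sum_ite_eq, Finset.sum_ite, Finset.sum_const_zero, add_zero]
  simp [SimpleGraph.neighborFinset_eq_filter]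

end JoinedUnion

theorem stmt_2_general {α : ℝ}
    {n : ℕ} (G : SimpleGraph (Fin n)) [DecidableRel G.Adj]
    (p : Fin n → ℕ) (i : Fin n) (hpi : 2 ≤ p i) :
    p i - 1 ≤
      eigMult (Aalpha (joinedUnion G (fun j => Fin (p j)) (fun _ => ⊤)) α)
        (α * (p i : ℝ) - 1 + α * ∑ j ∈ G.neighborFinset i, (p j : ℝ)) := by
  classical
  set H := joinedUnion G (fun j => Fin (p j)) (fun _ => ⊤)
  let a : Fin (p i) := ⟨0, by omega⟩
  have hcard : Fintype.card {b // b ≠ a} = p i - 1 := by simp [Fintype.card_subtype_compl]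
  rw [← hcard]
  refine card_le_eigMult (linearIndependent_single_sub_single
    (f := Sigma.mk (β := fun j => Fin (p j)) i) sigma_mk_injective a) fun b => ?_
  have hne : (⟨i, b⟩ : Σ j, Fin (p j)) ≠ ⟨i, a⟩ := by simpa using b.2
  have hcol : ∀ z, z ≠ ⟨i, b⟩ → z ≠ ⟨i, a⟩ → Aalpha H α z ⟨i, b⟩ = Aalpha H α z ⟨i, a⟩ :=
    fun z hzb hza => by
      rw [Aalpha_apply_of_ne H α hzb, Aalpha_apply_of_ne H α hza,
        joinedUnion_top_adj_iff_of_mem_block G p hzb hza]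
  have hadj : H.Adj ⟨i, b⟩ ⟨i, a⟩ := by
    simpa [H, joinedUnion_adj_mk_mk_self] using b.2
  rw [(Aalpha_isSymm H α).mulVec_single_sub_single hne hcol
      (by simp only [H, Aalpha_apply_self, joinedUnion_top_degree]),
    Aalpha_apply_self, Aalpha_apply_of_ne H α hne, if_pos hadj, joinedUnion_top_degree]
  push_cast [Nat.cast_sub (by omega : 1 ≤ p i)]
  congr 1
  ring

/-- eigenvalues of a joined union of complete graphs. -/
theorem stmt_2 {α : ℝ} (hα : α ∈ Set.Icc (0 : ℝ) 1)
    {n : ℕ} (hn : 3 ≤ n) (G : SimpleGraph (Fin n)) [DecidableRel G.Adj]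
    (p : Fin n → ℕ) (hp : ∀ i, 1 ≤ p i) (i : Fin n) (hpi : 2 ≤ p i) :
    p i - 1 ≤
      eigMult (Aalpha (joinedUnion G (fun j => Fin (p j)) (fun _ => ⊤)) α)
        (α * (p i : ℝ) - 1 + α * ∑ j ∈ G.neighborFinset i, (p j : ℝ)) :=
  stmt_2_general G p i hpi
end

section
/- Let α ∈ [0,1] be a real number, and let G = K_{t,t,…,t} be the complete p-partite graph with p ≥ 2 parts each of size t ≥ 1, so G has N = pt vertices. Then the characteristic polynomial of A_α(G) equals (x − αt(p−1))^{p(t−1)} · (x − t(αp−1))^{p−1} · (x − t(p−1)); equivalently, the A_α-spectrum of G consists of the eigenvalue αt(p−1) with multiplicity tp − p, the eigenvalue t(αp−1) with multiplicity p−1, and the simple eigenvalue t(p−1). -/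
open Matrix Polynomial BigOperators

/-!
Put `c = x - αt(p-1)` and `d = 1 - α`. Then `x • 1 - A_α = c • 1 + d • (I_p ⊗ J_t) - d • J`,
and the matrix `B = c • 1 + d • (I_p ⊗ J_t)` has constant row sums `s = c + t d`. Hence `B + u 𝟙ᵀ`
factors as `B (1 + s⁻¹ u 𝟙ᵀ)` for any constant vector `u`, and the matrix determinant lemma gives
`det (B - d J) = det B · (s - p t d) / s`; the same argument inside each block gives
`det B = (c ^ (t-1) s) ^ p`. This evaluates the characteristic polynomial at every `x` outside
the two roots of `c` and `s`, which determines it.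
-/

section RankOneDeterminant

variable {K : Type*} [Field K] {n : Type*} [Fintype n] [DecidableEq n]

theorem Matrix.det_add_const_mul_of_mulVec_const (B : Matrix n n K) {s : K} (hs : s ≠ 0)
    (hB : B *ᵥ (fun _ => 1) = fun _ => s) (d : K) :
    (B + of fun _ _ => d).det * s = B.det * (s + Fintype.card n * d) := by
  have hcol : B *ᵥ (fun _ => d / s) = fun _ => d := by
    rw [show (fun _ : n => d / s) = (d / s) • fun _ => 1 by ext; simp, mulVec_smul, hB]
    ext; simp [hs]
  have hfactor : B + of (fun _ _ => d) = B * (1 +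
      replicateCol Unit (fun _ : n => d / s) * replicateRow Unit (fun _ : n => (1 : K))) := by
    rw [Matrix.mul_add, Matrix.mul_one, ← Matrix.mul_assoc, ← replicateCol_mulVec, hcol]
    ext; simp [mul_apply]
  rw [hfactor, det_mul, det_one_add_replicateCol_mul_replicateRow]
  simp only [dotProduct, one_mul, Finset.sum_const, Finset.card_univ, nsmul_eq_mul]
  field_simp

theorem Matrix.det_smul_one_add_const [Nonempty n] {c : K} (hc : c ≠ 0) (d : K) :
    (c • (1 : Matrix n n K) + of fun _ _ => d).det =
      c ^ (Fintype.card n - 1) * (c + Fintype.card n * d) := by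
  have h := (c • (1 : Matrix n n K)).det_add_const_mul_of_mulVec_const hc
    (by ext; simp [smul_mulVec]) d
  have hpow : c ^ Fintype.card n = c ^ (Fintype.card n - 1) * c := by
    rw [← pow_succ, Nat.sub_add_cancel Fintype.card_pos]
  rw [det_smul, det_one, mul_one, hpow] at h
  exact mul_right_cancel₀ hc (by rw [h]; ring)

end RankOneDeterminant

/-- The Kronecker product `I_ι ⊗ J_W`, indexed by `Σ _ : ι, W`. -/
def Matrix.blockOnes (ι W K : Type*) [DecidableEq ι] [Zero K] [One K] :
    Matrix (Σ _ : ι, W) (Σ _ : ι, W) K :=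
  of fun v w => if v.1 = w.1 then 1 else 0

section BlockOnes

variable {ι W K : Type*} [Fintype ι] [Fintype W] [DecidableEq ι] [DecidableEq W] [Field K]

theorem Matrix.smul_one_add_smul_blockOnes_mulVec_one (c d : K) :
    (c • 1 + d • blockOnes ι W K) *ᵥ (fun _ => 1) = fun _ => c + Fintype.card W * d := by
  rw [add_mulVec, smul_mulVec, smul_mulVec, one_mulVec]
  ext v
  have hrow : ∑ w, blockOnes ι W K v w = Fintype.card W := by
    rw [Fintype.sum_sigma, Fintype.sum_eq_single v.1 fun i hi => by simp [blockOnes, Ne.symm hi]]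
    simp [blockOnes]
  simp [mulVec, dotProduct, hrow, mul_comm d]

theorem Matrix.det_smul_one_add_smul_blockOnes [Nonempty W] {c : K} (hc : c ≠ 0) (d : K) :
    (c • 1 + d • blockOnes ι W K).det =
      (c ^ (Fintype.card W - 1) * (c + Fintype.card W * d)) ^ Fintype.card ι := by
  let e : W × ι ≃ Σ _ : ι, W := (Equiv.prodComm W ι).trans (Equiv.sigmaEquivProd ι W).symm
  have hblock : c • 1 + d • blockOnes ι W K =
      reindex e e (blockDiagonal fun _ : ι => c • (1 : Matrix W W K) + of fun _ _ => d) := by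
    ext v w
    by_cases h : v.1 = w.1 <;>
      simp [e, blockOnes, blockDiagonal_apply, one_apply, Sigma.ext_iff, h]
  rw [hblock, det_reindex_self, det_blockDiagonal, Finset.prod_const, Finset.card_univ,
    det_smul_one_add_const hc]

theorem Matrix.det_smul_one_add_smul_blockOnes_add_const [Nonempty ι] [Nonempty W] {c d : K}
    (hc : c ≠ 0) (hs : c + Fintype.card W * d ≠ 0) :
    (c • 1 + d • blockOnes ι W K + of fun _ _ => -d).det =
      c ^ (Fintype.card ι * (Fintype.card W - 1)) *
        (c + Fintype.card W * d) ^ (Fintype.card ι - 1) *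
        (c + Fintype.card W * d - Fintype.card ι * Fintype.card W * d) := by
  set s := c + Fintype.card W * d
  have h := (c • 1 + d • blockOnes ι W K).det_add_const_mul_of_mulVec_const hs
    (smul_one_add_smul_blockOnes_mulVec_one c d) (-d)
  have hpow : s ^ Fintype.card ι = s ^ (Fintype.card ι - 1) * s := by
    rw [← pow_succ, Nat.sub_add_cancel Fintype.card_pos]
  rw [det_smul_one_add_smul_blockOnes hc, mul_pow, ← pow_mul, hpow, Fintype.card_sigma,
    Finset.sum_const, Finset.card_univ, smul_eq_mul] at h
  refine mul_right_cancel₀ hs ?_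
  rw [h, mul_comm (Fintype.card W - 1)]
  push_cast
  ring

end BlockOnes

section CompleteMultipartite

open SimpleGraph

variable {ι W : Type*} [Fintype ι] [Fintype W]

theorem SimpleGraph.degree_completeMultipartiteGraph_const (v : Σ _ : ι, W)
    [Fintype ((completeMultipartiteGraph fun _ : ι => W).neighborSet v)] :
    (completeMultipartiteGraph fun _ : ι => W).degree v =
      (Fintype.card ι - 1) * Fintype.card W := by
  classical
  let e : (completeMultipartiteGraph fun _ : ι => W).neighborSet v ≃ {i // i ≠ v.1} × W :=
    { toFun := fun w => (⟨w.1.1, Ne.symm w.2⟩, w.1.2)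
      invFun := fun x => ⟨⟨x.1.1, x.2⟩, Ne.symm x.1.2⟩
      left_inv := fun _ => rfl
      right_inv := fun _ => rfl }
  rw [← card_neighborSet_eq_degree, Fintype.card_congr e, Fintype.card_prod,
    Fintype.card_subtype_compl, Fintype.card_subtype_eq]

variable [DecidableEq ι] [DecidableEq W]

theorem scalar_sub_Aalpha_completeMultipartiteGraph_const (α x : ℝ) :
    scalar (Σ _ : ι, W) x - Aalpha (completeMultipartiteGraph fun _ : ι => W) α =
      (x - α * ((Fintype.card ι - 1) * Fintype.card W : ℕ)) • 1 +
        (1 - α) • blockOnes ι W ℝ + of fun _ _ => -(1 - α) := by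
  ext v w
  rcases eq_or_ne v w with rfl | hvw
  · simp [Aalpha, blockOnes, degree_completeMultipartiteGraph_const]
    ring
  · by_cases hb : v.1 = w.1 <;> simp [Aalpha, blockOnes, hvw, hb]

theorem charpoly_Aalpha_completeMultipartiteGraph_const [Nonempty ι] [Nonempty W] (α : ℝ) :
    (Aalpha (completeMultipartiteGraph fun _ : ι => W) α).charpoly =
      (X - C (α * (Fintype.card W : ℝ) * ((Fintype.card ι : ℝ) - 1))) ^
          (Fintype.card ι * (Fintype.card W - 1)) *
        (X - C ((Fintype.card W : ℝ) * (α * (Fintype.card ι : ℝ) - 1))) ^ (Fintype.card ι - 1) *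
        (X - C ((Fintype.card W : ℝ) * ((Fintype.card ι : ℝ) - 1))) := by
  have hp : (((Fintype.card ι - 1 : ℕ) : ℝ)) = Fintype.card ι - 1 := by
    rw [Nat.cast_sub Fintype.card_pos, Nat.cast_one]
  refine eq_of_infinite_eval_eq _ _ <|
    (Set.toFinite {α * Fintype.card W * (Fintype.card ι - 1),
      Fintype.card W * (α * Fintype.card ι - 1)}).infinite_compl.mono fun x hx => ?_
  simp only [Set.mem_compl_iff, Set.mem_insert_iff, Set.mem_singleton_iff, not_or] at hx
  have hc : x - α * ((Fintype.card ι - 1) * Fintype.card W : ℕ) =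
      x - α * Fintype.card W * (Fintype.card ι - 1) := by
    push_cast [hp]
    ring
  have hs : x - α * ((Fintype.card ι - 1) * Fintype.card W : ℕ) + Fintype.card W * (1 - α) =
      x - Fintype.card W * (α * Fintype.card ι - 1) := by
    rw [hc]
    ring
  have hs' : x - Fintype.card W * (α * Fintype.card ι - 1) -
      Fintype.card ι * Fintype.card W * (1 - α) = x - Fintype.card W * (Fintype.card ι - 1) := by
    ring
  rw [Set.mem_ofPred_eq, eval_charpoly, scalar_sub_Aalpha_completeMultipartiteGraph_const,
    det_smul_one_add_smul_blockOnes_add_const (hc ▸ sub_ne_zero.mpr hx.1)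
      (hs ▸ sub_ne_zero.mpr hx.2), hs, hs', hc]
  simp only [eval_mul, eval_pow, eval_sub, eval_X, eval_C]

end CompleteMultipartite

theorem stmt_4_general {α : ℝ}
    (p t : ℕ) (hp : 2 ≤ p) (ht : 1 ≤ t) :
    (Aalpha (SimpleGraph.completeMultipartiteGraph (fun _ : Fin p => Fin t)) α).charpoly =
      (X - C (α * (t : ℝ) * ((p : ℝ) - 1))) ^ (p * (t - 1)) *
        (X - C ((t : ℝ) * (α * (p : ℝ) - 1))) ^ (p - 1) *
        (X - C ((t : ℝ) * ((p : ℝ) - 1))) := by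
  have : Nonempty (Fin p) := ⟨⟨0, by omega⟩⟩
  have : Nonempty (Fin t) := ⟨⟨0, ht⟩⟩
  simpa using charpoly_Aalpha_completeMultipartiteGraph_const (ι := Fin p) (W := Fin t) α

/-- the `A_α`-characteristic polynomial of the complete `p`-partite
graph with all parts of size `t`. -/
theorem stmt_4 {α : ℝ} (hα : α ∈ Set.Icc (0 : ℝ) 1)
    (p t : ℕ) (hp : 2 ≤ p) (ht : 1 ≤ t) :
    (Aalpha (SimpleGraph.completeMultipartiteGraph (fun _ : Fin p => Fin t)) α).charpoly =
      (X - C (α * (t : ℝ) * ((p : ℝ) - 1))) ^ (p * (t - 1)) *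
        (X - C ((t : ℝ) * (α * (p : ℝ) - 1))) ^ (p - 1) *
        (X - C ((t : ℝ) * ((p : ℝ) - 1))) :=
  stmt_4_general p t hp ht
end

section
/- Let α ∈ [0,1] be a real number and for i = 1, 2, 3 let G_i be an r_i-regular simple graph on n_i vertices. Let G = G_1 ∇ (G_2 ∪ G_3) be the join of G_1 with the disjoint union of G_2 and G_3. If λ is an eigenvalue of A(G_1) admitting an eigenvector whose coordinates sum to zero, then α(r_1 + n_2 + n_3) + (1−α)λ is an eigenvalue of A_α(G); if λ is an eigenvalue of A(G_2) admitting an eigenvector whose coordinates sum to zero, then α(n_1 + r_2) + (1−α)λ is an eigenvalue of A_α(G); and if λ is an eigenvalue of A(G_3) admitting an eigenvector whose coordinates sum to zero, then α(n_1 + r_3) + (1−α)λ is an eigenvalue of A_α(G). -/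
open Matrix Polynomial BigOperators

section helpers
set_option linter.unusedSectionVars false
variable {V1 V2 V3 : Type} [Fintype V1] [Fintype V2] [Fintype V3]
  {G1 : SimpleGraph V1} {G2 : SimpleGraph V2} {G3 : SimpleGraph V3}
  [DecidableRel G1.Adj] [DecidableRel G2.Adj] [DecidableRel G3.Adj]

lemma adjJ_ll {a b : V1} :
    (graphJoin G1 (disjUnion G2 G3)).Adj (Sum.inl a) (Sum.inl b) ↔ G1.Adj a b := by
  simp only [graphJoin, SimpleGraph.fromRel_adj, ne_eq, Sum.inl.injEq]
  constructor
  · rintro ⟨hne, h | h⟩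
    · exact h
    · exact h.symm
  · exact fun h => ⟨h.ne, Or.inl h⟩

lemma adjJ_lr {a : V1} {w : V2 ⊕ V3} :
    (graphJoin G1 (disjUnion G2 G3)).Adj (Sum.inl a) (Sum.inr w) := by
  simp [graphJoin, SimpleGraph.fromRel_adj]

lemma adjJ_rl {a : V1} {w : V2 ⊕ V3} :
    (graphJoin G1 (disjUnion G2 G3)).Adj (Sum.inr w) (Sum.inl a) := by
  simp [graphJoin, SimpleGraph.fromRel_adj]

lemma adjJ_rr {w w' : V2 ⊕ V3} :
    (graphJoin G1 (disjUnion G2 G3)).Adj (Sum.inr w) (Sum.inr w') ↔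
      (disjUnion G2 G3).Adj w w' := by
  simp only [graphJoin, SimpleGraph.fromRel_adj, ne_eq, Sum.inr.injEq]
  constructor
  · rintro ⟨hne, h | h⟩
    · exact h
    · exact h.symm
  · exact fun h => ⟨h.ne, Or.inl h⟩

lemma adjU_ll {a b : V2} :
    (disjUnion G2 G3).Adj (Sum.inl a) (Sum.inl b) ↔ G2.Adj a b := by
  simp only [disjUnion, SimpleGraph.fromRel_adj, ne_eq, Sum.inl.injEq]
  constructor
  · rintro ⟨hne, h | h⟩
    · exact h
    · exact h.symm
  · exact fun h => ⟨h.ne, Or.inl h⟩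

lemma adjU_rr {a b : V3} :
    (disjUnion G2 G3).Adj (Sum.inr a) (Sum.inr b) ↔ G3.Adj a b := by
  simp only [disjUnion, SimpleGraph.fromRel_adj, ne_eq, Sum.inr.injEq]
  constructor
  · rintro ⟨hne, h | h⟩
    · exact h
    · exact h.symm
  · exact fun h => ⟨h.ne, Or.inl h⟩

lemma adjU_lr {a : V2} {b : V3} :
    ¬ (disjUnion G2 G3).Adj (Sum.inl a) (Sum.inr b) := by
  simp [disjUnion, SimpleGraph.fromRel_adj]

lemma adjU_rl {a : V3} {b : V2} :
    ¬ (disjUnion G2 G3).Adj (Sum.inr a) (Sum.inl b) := by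
  simp [disjUnion, SimpleGraph.fromRel_adj]

lemma deg_card {V : Type} [Fintype V] (G : SimpleGraph V) (v : V)
    [Fintype (G.neighborSet v)] [DecidablePred (G.Adj v)] :
    G.degree v = ∑ u, if G.Adj v u then 1 else 0 := by
  rw [← SimpleGraph.card_neighborSet_eq_degree, ← Finset.card_filter, ← Set.toFinset_card]
  congr 1
  ext u
  simp

lemma degJ1 {r1 : ℕ} (h1 : G1.IsRegularOfDegree r1) (a : V1)
    [Fintype ((graphJoin G1 (disjUnion G2 G3)).neighborSet (Sum.inl a))] :
    (graphJoin G1 (disjUnion G2 G3)).degree (Sum.inl a)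
      = r1 + Fintype.card V2 + Fintype.card V3 := by
  classical
  rw [deg_card, Fintype.sum_sum_type]
  have e1 : ∑ b : V1,
      (if (graphJoin G1 (disjUnion G2 G3)).Adj (Sum.inl a) (Sum.inl b) then 1 else 0) = r1 := by
    simp only [adjJ_ll]
    rw [← deg_card]
    exact h1 a
  have e2 : ∑ w : V2 ⊕ V3,
      (if (graphJoin G1 (disjUnion G2 G3)).Adj (Sum.inl a) (Sum.inr w) then 1 else 0)
        = Fintype.card V2 + Fintype.card V3 := by
    simp [adjJ_lr, Fintype.card_sum]
  rw [e1, e2, add_assoc]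

lemma degJ2 {r2 : ℕ} (h2 : G2.IsRegularOfDegree r2) (b : V2)
    [Fintype ((graphJoin G1 (disjUnion G2 G3)).neighborSet (Sum.inr (Sum.inl b)))] :
    (graphJoin G1 (disjUnion G2 G3)).degree (Sum.inr (Sum.inl b))
      = Fintype.card V1 + r2 := by
  classical
  rw [deg_card, Fintype.sum_sum_type]
  have e1 : ∑ a : V1,
      (if (graphJoin G1 (disjUnion G2 G3)).Adj (Sum.inr (Sum.inl b)) (Sum.inl a) then 1 else 0)
        = Fintype.card V1 := by
    simp [adjJ_rl]
  have e2 : ∑ w : V2 ⊕ V3,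
      (if (graphJoin G1 (disjUnion G2 G3)).Adj (Sum.inr (Sum.inl b)) (Sum.inr w) then 1 else 0)
        = r2 := by
    rw [Fintype.sum_sum_type]
    simp only [adjJ_rr, adjU_ll, (adjU_lr (G2 := G2) (G3 := G3)), if_false,
      Finset.sum_const_zero, add_zero]
    rw [← deg_card]
    exact h2 b
  rw [e1, e2]

lemma degJ3 {r3 : ℕ} (h3 : G3.IsRegularOfDegree r3) (c : V3)
    [Fintype ((graphJoin G1 (disjUnion G2 G3)).neighborSet (Sum.inr (Sum.inr c)))] :
    (graphJoin G1 (disjUnion G2 G3)).degree (Sum.inr (Sum.inr c))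
      = Fintype.card V1 + r3 := by
  classical
  rw [deg_card, Fintype.sum_sum_type]
  have e1 : ∑ a : V1,
      (if (graphJoin G1 (disjUnion G2 G3)).Adj (Sum.inr (Sum.inr c)) (Sum.inl a) then 1 else 0)
        = Fintype.card V1 := by
    simp [adjJ_rl]
  have e2 : ∑ w : V2 ⊕ V3,
      (if (graphJoin G1 (disjUnion G2 G3)).Adj (Sum.inr (Sum.inr c)) (Sum.inr w) then 1 else 0)
        = r3 := by
    rw [Fintype.sum_sum_type]
    simp only [adjJ_rr, adjU_rr, (adjU_rl (G2 := G2) (G3 := G3)), if_false,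
      Finset.sum_const_zero, zero_add]
    rw [← deg_card]
    exact h3 c
  rw [e1, e2]

end helpers

/-- eigenvalues of `G₁ ∇ (G₂ ∪ G₃)` coming from eigenvectors of the
components whose coordinates sum to zero. -/
theorem stmt_5 {α : ℝ} (hα : α ∈ Set.Icc (0 : ℝ) 1)
    {V1 V2 V3 : Type} [Fintype V1] [Fintype V2] [Fintype V3]
    (G1 : SimpleGraph V1) (G2 : SimpleGraph V2) (G3 : SimpleGraph V3)
    [DecidableRel G1.Adj] [DecidableRel G2.Adj] [DecidableRel G3.Adj]
    (r1 r2 r3 : ℕ) (h1 : G1.IsRegularOfDegree r1) (h2 : G2.IsRegularOfDegree r2)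
    (h3 : G3.IsRegularOfDegree r3) (lam : ℝ) :
    ((∃ x : V1 → ℝ, x ≠ 0 ∧ G1.adjMatrix ℝ *ᵥ x = lam • x ∧ ∑ u, x u = 0) →
      Matrix.IsEigenvalue (Aalpha (graphJoin G1 (disjUnion G2 G3)) α)
        (α * ((r1 : ℝ) + (Fintype.card V2 : ℝ) + (Fintype.card V3 : ℝ)) + (1 - α) * lam)) ∧
    ((∃ x : V2 → ℝ, x ≠ 0 ∧ G2.adjMatrix ℝ *ᵥ x = lam • x ∧ ∑ u, x u = 0) →
      Matrix.IsEigenvalue (Aalpha (graphJoin G1 (disjUnion G2 G3)) α)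
        (α * ((Fintype.card V1 : ℝ) + (r2 : ℝ)) + (1 - α) * lam)) ∧
    ((∃ x : V3 → ℝ, x ≠ 0 ∧ G3.adjMatrix ℝ *ᵥ x = lam • x ∧ ∑ u, x u = 0) →
      Matrix.IsEigenvalue (Aalpha (graphJoin G1 (disjUnion G2 G3)) α)
        (α * ((Fintype.card V1 : ℝ) + (r3 : ℝ)) + (1 - α) * lam)) := by
  classical
  have expand : ∀ (y : V1 ⊕ (V2 ⊕ V3) → ℝ) (v : V1 ⊕ (V2 ⊕ V3)),
      (Aalpha (graphJoin G1 (disjUnion G2 G3)) α *ᵥ y) v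
        = α * ((graphJoin G1 (disjUnion G2 G3)).degree v : ℝ) * y v
          + (1 - α) * ∑ u, if (graphJoin G1 (disjUnion G2 G3)).Adj v u then y u else 0 := by
    intro y v
    simp only [Aalpha]
    rw [Matrix.add_mulVec, Matrix.smul_mulVec, Matrix.smul_mulVec]
    simp only [Pi.add_apply, Pi.smul_apply, Matrix.mulVec_diagonal, smul_eq_mul]
    congr 1
    · ring
    · congr 1
      simp only [Matrix.mulVec, dotProduct, SimpleGraph.adjMatrix_apply, ite_mul,
        one_mul, zero_mul]
  refine ⟨?_, ?_, ?_⟩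
  · rintro ⟨x, hx0, hxe, hxs⟩
    refine ⟨Sum.elim x 0, fun h => hx0 (funext fun a => by
      simpa using congrFun h (Sum.inl a)), ?_⟩
    funext v
    rw [expand]
    cases v with
    | inl a =>
      have hd : ((graphJoin G1 (disjUnion G2 G3)).degree (Sum.inl a) : ℝ)
          = (r1 : ℝ) + Fintype.card V2 + Fintype.card V3 := by
        rw [degJ1 h1 a]; push_cast; ring
      have hx : ∑ b : V1, (if G1.Adj a b then x b else 0) = lam * x a := by
        have h := congrFun hxe a
        simp only [Matrix.mulVec, dotProduct, SimpleGraph.adjMatrix_apply, ite_mul,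
          one_mul, zero_mul, Pi.smul_apply, smul_eq_mul] at h
        exact h
      rw [Fintype.sum_sum_type]
      simp only [Sum.elim_inl, Sum.elim_inr, adjJ_ll, Pi.zero_apply, ite_self,
        Finset.sum_const_zero, add_zero, hd, hx, Pi.smul_apply, smul_eq_mul]
      ring
    | inr w =>
      rw [Fintype.sum_sum_type]
      have : ∀ b : V1, (if (graphJoin G1 (disjUnion G2 G3)).Adj (Sum.inr w) (Sum.inl b)
          then Sum.elim x (0 : V2 ⊕ V3 → ℝ) (Sum.inl b) else 0) = x b := by
        intro b
        simp [adjJ_rl]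
      simp only [this, Sum.elim_inr, Pi.zero_apply, ite_self, Finset.sum_const_zero,
        add_zero, hxs, Pi.smul_apply, smul_eq_mul]
      ring
  · rintro ⟨x, hx0, hxe, hxs⟩
    refine ⟨Sum.elim 0 (Sum.elim x 0), fun h => hx0 (funext fun b => by
      simpa using congrFun h (Sum.inr (Sum.inl b))), ?_⟩
    funext v
    rw [expand]
    cases v with
    | inl a =>
      rw [Fintype.sum_sum_type, Fintype.sum_sum_type]
      simp only [Sum.elim_inl, Sum.elim_inr, Pi.zero_apply, ite_self,
        Finset.sum_const_zero, adjJ_lr, if_true, hxs, mul_zero, zero_mul,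
        add_zero, zero_add, Pi.smul_apply, smul_eq_mul]
    | inr w =>
      cases w with
      | inl b =>
        have hd : ((graphJoin G1 (disjUnion G2 G3)).degree (Sum.inr (Sum.inl b)) : ℝ)
            = (Fintype.card V1 : ℝ) + r2 := by
          rw [degJ2 h2 b]; push_cast; ring
        have hx : ∑ u : V2, (if G2.Adj b u then x u else 0) = lam * x b := by
          have h := congrFun hxe b
          simp only [Matrix.mulVec, dotProduct, SimpleGraph.adjMatrix_apply, ite_mul,
            one_mul, zero_mul, Pi.smul_apply, smul_eq_mul] at h
          exact h
        rw [Fintype.sum_sum_type, Fintype.sum_sum_type]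
        simp only [Sum.elim_inl, Sum.elim_inr, Pi.zero_apply, ite_self,
          Finset.sum_const_zero, zero_add, adjJ_rr, adjU_ll, hd, hx,
          (adjU_lr (G2 := G2) (G3 := G3)), if_false, add_zero,
          Pi.smul_apply, smul_eq_mul]
        ring
      | inr c =>
        rw [Fintype.sum_sum_type, Fintype.sum_sum_type]
        simp only [Sum.elim_inl, Sum.elim_inr, Pi.zero_apply, ite_self, adjJ_rr,
          (adjU_rl (G2 := G2) (G3 := G3)), if_false, iff_false, Finset.sum_const_zero,
          mul_zero, zero_mul, add_zero, zero_add, Pi.smul_apply, smul_eq_mul]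
  · rintro ⟨x, hx0, hxe, hxs⟩
    refine ⟨Sum.elim 0 (Sum.elim 0 x), fun h => hx0 (funext fun c => by
      simpa using congrFun h (Sum.inr (Sum.inr c))), ?_⟩
    funext v
    rw [expand]
    cases v with
    | inl a =>
      rw [Fintype.sum_sum_type, Fintype.sum_sum_type]
      simp only [Sum.elim_inl, Sum.elim_inr, Pi.zero_apply, ite_self,
        Finset.sum_const_zero, adjJ_lr, if_true, hxs, mul_zero, zero_mul,
        add_zero, zero_add, Pi.smul_apply, smul_eq_mul]
    | inr w =>
      cases w with
      | inl b =>
        rw [Fintype.sum_sum_type, Fintype.sum_sum_type]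
        simp only [Sum.elim_inl, Sum.elim_inr, Pi.zero_apply, ite_self, adjJ_rr,
          (adjU_lr (G2 := G2) (G3 := G3)), if_false, iff_false, Finset.sum_const_zero,
          mul_zero, zero_mul, add_zero, zero_add, Pi.smul_apply, smul_eq_mul]
      | inr c =>
        have hd : ((graphJoin G1 (disjUnion G2 G3)).degree (Sum.inr (Sum.inr c)) : ℝ)
            = (Fintype.card V1 : ℝ) + r3 := by
          rw [degJ3 h3 c]; push_cast; ring
        have hx : ∑ u : V3, (if G3.Adj c u then x u else 0) = lam * x c := by
          have h := congrFun hxe c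
          simp only [Matrix.mulVec, dotProduct, SimpleGraph.adjMatrix_apply, ite_mul,
            one_mul, zero_mul, Pi.smul_apply, smul_eq_mul] at h
          exact h
        rw [Fintype.sum_sum_type, Fintype.sum_sum_type]
        simp only [Sum.elim_inl, Sum.elim_inr, Pi.zero_apply, ite_self,
          Finset.sum_const_zero, zero_add, adjJ_rr, adjU_rr, hd, hx,
          (adjU_rl (G2 := G2) (G3 := G3)), if_false, add_zero,
          Pi.smul_apply, smul_eq_mul]
        ring
end

section
/- Let α ∈ [0,1] be a real number and let K_{a,b} be the complete bipartite graph with parts of sizes a ≥ 1 and b ≥ 1. Then the characteristic polynomial of A_α(K_{a,b}) equals (x − αb)^{a−1} · (x − αa)^{b−1} · (x² − α(a+b)x + ab(2α−1)); in particular, the A_α-spectrum of K_{a,b} consists of αb with multiplicity a−1, αa with multiplicity b−1, and the two eigenvalues ½(α(a+b) ± √(α²(a+b)² + 4ab(1−2α))). -/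
open Matrix Polynomial BigOperators

/-!
In block form `A_α(K_{a,b})` is `[[αb·I, (1-α)·J], [(1-α)·J, αa·I]]` with `J` the all-ones
matrix, so its characteristic matrix has scalar diagonal blocks. Over the fraction field of
`ℝ[X]` the upper left block `(X - αb)·I` is invertible, and its Schur complement is a scalar
matrix minus a multiple of `J`; since `J` has rank one, the matrix determinant lemma evaluates it.
-/

namespace Matrix

variable {l m n : Type*}

theorem of_one_mul_of_one {R : Type*} [Semiring R] [Fintype m] :
    (of 1 : Matrix l m R) * (of 1 : Matrix m n R) = (Fintype.card m : R) • of 1 := by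
  ext; simp [mul_apply]

theorem map_smul_of_one {R S : Type*} [NonAssocSemiring R] [NonAssocSemiring S] (f : R →+* S)
    (r : R) : (r • of 1 : Matrix m n R).map f = f r • of 1 := by
  ext; simp

variable [Fintype m] [Fintype n] [DecidableEq m] [DecidableEq n]

theorem charmatrix_fromBlocks_smul_one_smul_of_one {R : Type*} [CommRing R] (s t p q : R) :
    charmatrix
        (fromBlocks (s • 1) (p • of 1) (q • of 1) (t • 1) : Matrix (m ⊕ n) (m ⊕ n) R) =
      fromBlocks ((X - C s) • 1) (-C p • of 1) (-C q • of 1) ((X - C t) • 1) := by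
  ext (i | i) (j | j) <;>
    simp [charmatrix_apply, one_apply, diagonal_apply, apply_ite C, ite_sub_ite]

section Field

variable {K : Type*} [Field K]

theorem det_smul_one_sub_smul_of_one [Nonempty n] {x : K} (hx : x ≠ 0) (y : K) :
    det (x • 1 - y • of 1 : Matrix n n K) =
      x ^ (Fintype.card n - 1) * (x - y * Fintype.card n) := by
  have hrank_one :
      x • 1 - y • of 1 = x • (1 + vecMulVec (-(y / x) • 1) 1 : Matrix n n K) := by
    ext i j
    by_cases h : i = j <;> simp [vecMulVec, h, sub_eq_add_neg] <;> field_simp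
  rw [hrank_one, det_smul, vecMulVec_eq Unit, det_one_add_replicateCol_mul_replicateRow]
  obtain ⟨k, hk⟩ := Nat.exists_eq_add_one.mpr (Fintype.card_pos (α := n))
  simp only [hk, dotProduct, Pi.one_apply, Pi.smul_apply, smul_eq_mul, mul_one,
    Finset.sum_const, Finset.card_univ, nsmul_eq_mul, Nat.add_sub_cancel]
  field_simp
  ring

theorem det_fromBlocks_smul_one_smul_of_one_of_field [Nonempty m] [Nonempty n] {s t : K}
    (hs : s ≠ 0) (ht : t ≠ 0) (p q : K) :
    det (fromBlocks (s • 1) (p • of 1) (q • of 1) (t • 1) : Matrix (m ⊕ n) (m ⊕ n) K) =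
      s ^ (Fintype.card m - 1) * t ^ (Fintype.card n - 1) *
        (s * t - p * q * Fintype.card m * Fintype.card n) := by
  let _ : Invertible (s • 1 : Matrix m m K) :=
    invertibleOfRightInverse _ (s⁻¹ • 1) <| by
      rw [smul_mul_smul_comm, mul_inv_cancel₀ hs, one_smul, Matrix.mul_one]
  have hschur :
      (q • of 1 : Matrix n m K) * ⅟(s • 1 : Matrix m m K) * (p • of 1 : Matrix m n K) =
        (q * s⁻¹ * p * Fintype.card m) • (of 1 : Matrix n n K) := by
    rw [show ⅟(s • 1 : Matrix m m K) = s⁻¹ • 1 from rfl]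
    simp only [Matrix.smul_mul, Matrix.mul_smul, Matrix.mul_one, of_one_mul_of_one, smul_smul]
    congr 1
    ring
  rw [det_fromBlocks₁₁, hschur, det_smul_one_sub_smul_of_one ht, det_smul, det_one]
  obtain ⟨k, hk⟩ := Nat.exists_eq_add_one.mpr (Fintype.card_pos (α := m))
  simp only [hk, Nat.add_sub_cancel]
  field_simp
  ring

end Field

theorem det_fromBlocks_smul_one_smul_of_one {R : Type*} [CommRing R] [IsDomain R] [Nonempty m]
    [Nonempty n] {s t : R} (hs : s ≠ 0) (ht : t ≠ 0) (p q : R) :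
    det (fromBlocks (s • 1) (p • of 1) (q • of 1) (t • 1) : Matrix (m ⊕ n) (m ⊕ n) R) =
      s ^ (Fintype.card m - 1) * t ^ (Fintype.card n - 1) *
        (s * t - p * q * Fintype.card m * Fintype.card n) := by
  let φ := algebraMap R (FractionRing R)
  have hφ : Function.Injective φ := IsFractionRing.injective R (FractionRing R)
  apply hφ
  rw [RingHom.map_det, RingHom.mapMatrix_apply, fromBlocks_map, map_smul_of_one, map_smul_of_one,
    map_smul' _ _ _ (map_mul φ), map_smul' _ _ _ (map_mul φ),
    Matrix.map_one _ (map_zero φ) (map_one φ), Matrix.map_one _ (map_zero φ) (map_one φ),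
    det_fromBlocks_smul_one_smul_of_one_of_field ((map_ne_zero_iff φ hφ).mpr hs)
      ((map_ne_zero_iff φ hφ).mpr ht)]
  simp only [map_mul, map_sub, map_pow, map_natCast]

end Matrix

namespace SimpleGraph

variable {V W : Type*}

theorem completeBipartiteGraph_degree_inl [Fintype W] (v : V)
    [Fintype ((completeBipartiteGraph V W).neighborSet (Sum.inl v))] :
    (completeBipartiteGraph V W).degree (Sum.inl v) = Fintype.card W := by
  rw [← card_neighborSet_eq_degree]
  refine Fintype.card_congr
    ((Equiv.setCongr ?_).trans (Equiv.ofInjective _ Sum.inr_injective).symm)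
  ext (w | w) <;> simp

theorem completeBipartiteGraph_degree_inr [Fintype V] (w : W)
    [Fintype ((completeBipartiteGraph V W).neighborSet (Sum.inr w))] :
    (completeBipartiteGraph V W).degree (Sum.inr w) = Fintype.card V := by
  rw [← card_neighborSet_eq_degree]
  refine Fintype.card_congr
    ((Equiv.setCongr ?_).trans (Equiv.ofInjective _ Sum.inl_injective).symm)
  ext (v | v) <;> simp

end SimpleGraph

open SimpleGraph in
theorem Aalpha_completeBipartiteGraph {V W : Type*} [Fintype V] [Fintype W] [DecidableEq V]
    [DecidableEq W] (α : ℝ) :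
    Aalpha (completeBipartiteGraph V W) α =
      fromBlocks ((α * Fintype.card W) • 1) ((1 - α) • of 1) ((1 - α) • of 1)
        ((α * Fintype.card V) • 1) := by
  ext (v | w) (v' | w') <;>
    simp [Aalpha, diagonal_apply, one_apply, completeBipartiteGraph_degree_inl,
      completeBipartiteGraph_degree_inr]

theorem stmt_9_general {α : ℝ}
    (a b : ℕ) (ha : 1 ≤ a) (hb : 1 ≤ b) :
    (Aalpha (completeBipartiteGraph (Fin a) (Fin b)) α).charpoly =
      (X - C (α * (b : ℝ))) ^ (a - 1) * (X - C (α * (a : ℝ))) ^ (b - 1) *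
        (X ^ 2 - C (α * ((a : ℝ) + (b : ℝ))) * X + C ((a : ℝ) * (b : ℝ) * (2 * α - 1))) := by
  have : Nonempty (Fin a) := ⟨⟨0, ha⟩⟩
  have : Nonempty (Fin b) := ⟨⟨0, hb⟩⟩
  rw [Aalpha_completeBipartiteGraph, charpoly, charmatrix_fromBlocks_smul_one_smul_of_one,
    det_fromBlocks_smul_one_smul_of_one (X_sub_C_ne_zero _) (X_sub_C_ne_zero _)]
  simp only [Fintype.card_fin]
  congr 1
  simp only [map_mul, map_sub, map_add, map_one, map_natCast, map_ofNat]
  ring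

/-- the `A_α`-characteristic polynomial of the complete bipartite
graph `K_{a,b}`. -/
theorem stmt_9 {α : ℝ} (hα : α ∈ Set.Icc (0 : ℝ) 1)
    (a b : ℕ) (ha : 1 ≤ a) (hb : 1 ≤ b) :
    (Aalpha (completeBipartiteGraph (Fin a) (Fin b)) α).charpoly =
      (X - C (α * (b : ℝ))) ^ (a - 1) * (X - C (α * (a : ℝ))) ^ (b - 1) *
        (X ^ 2 - C (α * ((a : ℝ) + (b : ℝ))) * X + C ((a : ℝ) * (b : ℝ) * (2 * α - 1))) :=
  stmt_9_general a b ha hb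
end

section
/- Let α ∈ [0,1] be a real number and let 𝒢 be a finite group of order n ≥ 3. Let b be the number of vertices of the power graph P(𝒢) that are adjacent to every other vertex of P(𝒢). Then αn − 1 is an eigenvalue of A_α(P(𝒢)) whose eigenspace has dimension at least b − 1. -/
open Matrix Polynomial BigOperators

/-
If `u` is a universal vertex, the `u`-th column of `A_α` is `(1 - α)` on every other vertex and
`α (n - 1)` at `u`, i.e. `(α n - 1) e_u + (1 - α) 𝟙`. So for two universal vertices `u ≠ v` the
all-ones parts cancel and `e_u - e_v` is an eigenvector for `α n - 1`. Fixing one universal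
vertex `v₀`, the vectors `e_u - e_{v₀}` for the other `b - 1` universal vertices `u` are linearly
independent, as forgetting the `v₀`-coordinate sends them to distinct unit vectors.
-/

namespace SimpleGraph

variable {V : Type*} [Fintype V] [DecidableEq V]

theorem Aalpha_mulVec_single_of_isUniversal (H : SimpleGraph V) (α : ℝ) {u : V}
    (hu : H.IsUniversal u) :
    Aalpha H α *ᵥ Pi.single u 1
      = (α * Fintype.card V - 1) • Pi.single u 1 + (1 - α) • (1 : V → ℝ) := by
  classical
  have hcard : 1 ≤ Fintype.card V := Fintype.card_pos_iff.mpr ⟨u⟩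
  ext w
  rw [mulVec_single_one]
  by_cases hwu : w = u
  · subst hwu
    simp [Aalpha, (degree_eq_card_sub_one H w).mpr hu, Nat.cast_sub hcard]
    ring
  · simp [Aalpha, hwu, (hu (Ne.symm hwu)).symm]

theorem Aalpha_mulVec_single_sub_single_of_isUniversal (H : SimpleGraph V) (α : ℝ) {u v : V}
    (hu : H.IsUniversal u) (hv : H.IsUniversal v) :
    Aalpha H α *ᵥ (Pi.single u 1 - Pi.single v 1)
      = (α * Fintype.card V - 1) • (Pi.single u 1 - Pi.single v 1 : V → ℝ) := by
  rw [mulVec_sub, Aalpha_mulVec_single_of_isUniversal H α hu,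
    Aalpha_mulVec_single_of_isUniversal H α hv, smul_sub]
  abel

end SimpleGraph

theorem linearIndependent_single_one_sub_single {R V : Type*} [Ring R] [DecidableEq V]
    {s : Set V} {v : V} (hv : v ∉ s) :
    LinearIndependent R (fun u : s => (Pi.single (u : V) 1 - Pi.single v 1 : V → R)) := by
  refine LinearIndependent.of_comp (LinearMap.funLeft R R ((↑) : s → V)) ?_
  convert Pi.linearIndependent_single_one s R using 1
  ext u w
  have hwv : (w : V) ≠ v := fun h => hv (h ▸ w.2)
  simp [LinearMap.funLeft_apply, Pi.single_apply, hwv, Subtype.ext_iff]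

theorem card_le_eigMult_of_linearIndependent {n ι : Type*} [Fintype n] [Fintype ι]
    {M : Matrix n n ℝ} {μ : ℝ} {f : ι → n → ℝ} (hf : ∀ i, M *ᵥ f i = μ • f i)
    (hl : LinearIndependent ℝ f) :
    Fintype.card ι ≤ eigMult M μ := by
  classical
  have hmem : ∀ i, f i ∈ Module.End.eigenspace (toLin' M) μ := fun i =>
    Module.End.mem_eigenspace_iff.mpr (by rw [toLin'_apply]; exact hf i)
  exact (LinearIndependent.of_comp (Submodule.subtype _)
    (v := fun i => (⟨f i, hmem i⟩ : Module.End.eigenspace (toLin' M) μ)) hl).fintype_card_le_finrank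

theorem SimpleGraph.ncard_universalVerts_sub_one_le_eigMult {V : Type*} [Fintype V]
    (H : SimpleGraph V) (α : ℝ) :
    H.universalVerts.ncard - 1 ≤ eigMult (Aalpha H α) (α * Fintype.card V - 1) := by
  classical
  obtain h | ⟨v, hv⟩ := H.universalVerts.eq_empty_or_nonempty
  · simp [h]
  rw [← Set.ncard_sdiff_singleton_of_mem hv, ← Nat.card_coe_set_eq, Nat.card_eq_fintype_card]
  exact card_le_eigMult_of_linearIndependent
    (fun u => H.Aalpha_mulVec_single_sub_single_of_isUniversal α u.2.1 hv)
    (linearIndependent_single_one_sub_single (fun h => h.2 rfl))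

theorem stmt_12_general {α : ℝ}
    (G : Type) [Group G] [Fintype G]
    (b : ℕ) (hb : b = Nat.card {v : G | ∀ w : G, w ≠ v → (powerGraph G).Adj v w}) :
    b - 1 ≤ eigMult (Aalpha (powerGraph G) α) (α * (Fintype.card G : ℝ) - 1) := by
  have hS : {v : G | ∀ w : G, w ≠ v → (powerGraph G).Adj v w} = (powerGraph G).universalVerts :=
    Set.ext fun v => ⟨fun h _ hvw => h _ (Ne.symm hvw), fun h _ hwv => h (Ne.symm hwv)⟩
  rw [hb, hS, Nat.card_coe_set_eq]
  exact (powerGraph G).ncard_universalVerts_sub_one_le_eigMult α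

/-- `αn − 1` is an eigenvalue of the power graph of a finite group
of order `n ≥ 3`, with eigenspace of dimension at least `b − 1`, where `b` is the
number of vertices adjacent to every other vertex. -/
theorem stmt_12 {α : ℝ} (hα : α ∈ Set.Icc (0 : ℝ) 1)
    (G : Type) [Group G] [Fintype G] (hn : 3 ≤ Fintype.card G)
    (b : ℕ) (hb : b = Nat.card {v : G | ∀ w : G, w ≠ v → (powerGraph G).Adj v w}) :
    b - 1 ≤ eigMult (Aalpha (powerGraph G) α) (α * (Fintype.card G : ℝ) - 1) :=
  stmt_12_general G b hb
end

section
/- Let α ∈ [0,1] be a real number and let ℤ_n be the cyclic group of order n ≥ 3. Then αn − 1 is an eigenvalue of A_α(P(ℤ_n)) whose eigenspace has dimension at least φ(n), where φ is Euler's totient function. -/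
/-! The identity and the generators of `ℤ_n` are adjacent to every other vertex of `P(ℤ_n)`.
If `a ≠ b` are two such vertices of a graph on `N` vertices, the columns `a` and `b` of `A_α`
agree outside `{a, b}`, so `e_a - e_b` is an eigenvector for `α N - 1`. Taking `b = 1` and letting
`a` run over the `φ(n)` generators gives `φ(n)` linearly independent eigenvectors. -/

open Matrix Polynomial BigOperators

lemma linearIndependent_single_one_sub_single_one (R : Type*) [Ring R] {ι V : Type*}
    [DecidableEq V] {f : ι → V} (hf : Function.Injective f) {b : V} (hb : b ∉ Set.range f) :
    LinearIndependent R (fun i => (Pi.single (f i) 1 - Pi.single b 1 : V → R)) := by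
  classical
  rw [linearIndependent_iff']
  intro s c hc i hi
  have hfib : f i ≠ b := fun h => hb ⟨i, h⟩
  simpa [Finset.sum_apply, Pi.single_apply, hf.eq_iff, hfib, hi] using congrFun hc (f i)

namespace SimpleGraph

variable {V : Type*} [Fintype V] (G : SimpleGraph V)

lemma degree_eq_card_sub_one_of_forall_adj [DecidableEq V] [DecidableRel G.Adj] {a : V}
    (ha : ∀ y ≠ a, G.Adj a y) : G.degree a = Fintype.card V - 1 := by
  have : G.neighborFinset a = Finset.univ.erase a := by
    ext y
    simpa using ⟨fun h => h.ne', ha y⟩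
  rw [← card_neighborFinset_eq_degree, this, Finset.card_erase_of_mem (Finset.mem_univ a),
    Finset.card_univ]

lemma Aalpha_apply_of_forall_adj [DecidableEq V] (α : ℝ) {c : V} (hc : ∀ y ≠ c, G.Adj c y)
    (x : V) : Aalpha G α x c = if x = c then α * (Fintype.card V - 1) else 1 - α := by
  classical
  have hcard : 1 ≤ Fintype.card V := Fintype.card_pos_iff.mpr ⟨c⟩
  unfold Aalpha
  simp only [Matrix.add_apply, Matrix.smul_apply, diagonal_apply, adjMatrix_apply, smul_eq_mul]
  by_cases hx : x = c
  · subst hx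
    simp [degree_eq_card_sub_one_of_forall_adj G hc, Nat.cast_sub hcard]
  · simp [hx, (hc x hx).symm]

lemma Aalpha_mulVec_single_sub_single [DecidableEq V] (α : ℝ) {a b : V} (hab : a ≠ b)
    (ha : ∀ y ≠ a, G.Adj a y) (hb : ∀ y ≠ b, G.Adj b y) :
    (Aalpha G α) *ᵥ (Pi.single a 1 - Pi.single b 1)
      = (α * Fintype.card V - 1) • (Pi.single a 1 - Pi.single b 1) := by
  funext x
  simp only [mulVec_sub, mulVec_single_one, Pi.sub_apply, Pi.smul_apply, col_apply,
    Aalpha_apply_of_forall_adj G α ha, Aalpha_apply_of_forall_adj G α hb, Pi.single_apply,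
    smul_eq_mul]
  by_cases hxa : x = a
  · subst hxa
    simp only [↓reduceIte, hab, sub_zero, mul_one]
    ring
  · by_cases hxb : x = b
    · subst hxb
      simp only [hab.symm, ↓reduceIte, zero_sub, mul_neg, mul_one, neg_sub]
      ring
    · simp [hxa, hxb]

lemma card_le_eigMult_Aalpha {ι : Type*} [Fintype ι] (α : ℝ) {f : ι → V}
    (hf : Function.Injective f) (hfadj : ∀ i, ∀ y ≠ f i, G.Adj (f i) y) {b : V}
    (hb : b ∉ Set.range f) (hbadj : ∀ y ≠ b, G.Adj b y) :
    Fintype.card ι ≤ eigMult (Aalpha G α) (α * Fintype.card V - 1) := by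
  classical
  let E := Module.End.eigenspace (toLin' (Aalpha G α)) (α * Fintype.card V - 1)
  have hmem (i : ι) : Pi.single (f i) 1 - Pi.single b 1 ∈ E := by
    rw [Module.End.mem_eigenspace_iff, toLin'_apply]
    exact G.Aalpha_mulVec_single_sub_single α (fun h => hb ⟨i, h⟩) (hfadj i) hbadj
  have hli : LinearIndependent ℝ (fun i => (⟨_, hmem i⟩ : E)) :=
    LinearIndependent.of_comp E.subtype
      (linearIndependent_single_one_sub_single_one ℝ hf hb)
  exact hli.fintype_card_le_finrank

end SimpleGraph

section PowerGraph

variable {G : Type*} [Group G] [Finite G]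

lemma powerGraph_adj_of_eq_pow {x y : G} (hxy : x ≠ y) (k : ℕ) (hy : y = x ^ k) :
    (powerGraph G).Adj x y :=
  ⟨hxy, Or.inl ⟨k + orderOf x, by have := orderOf_pos x; omega,
    by rw [pow_add, pow_orderOf_eq_one, mul_one, hy]⟩⟩

lemma powerGraph_one_adj {y : G} (hy : y ≠ 1) : (powerGraph G).Adj 1 y :=
  (powerGraph_adj_of_eq_pow hy 0 (pow_zero y).symm).symm

end PowerGraph

lemma powerGraph_ofAdd_unit_adj {n : ℕ} [NeZero n] (u : (ZMod n)ˣ)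
    {y : Multiplicative (ZMod n)} (hy : y ≠ .ofAdd (u : ZMod n)) :
    (powerGraph (Multiplicative (ZMod n))).Adj (.ofAdd (u : ZMod n)) y := by
  refine powerGraph_adj_of_eq_pow hy.symm ((u⁻¹ : (ZMod n)ˣ) * y.toAdd : ZMod n).val ?_
  apply Multiplicative.toAdd.injective
  rw [toAdd_pow, toAdd_ofAdd, nsmul_eq_mul, ZMod.natCast_zmod_val, mul_comm, ← mul_assoc,
    Units.mul_inv, one_mul]

theorem stmt_13_general {α : ℝ}
    (n : ℕ) [NeZero n] (hn : 3 ≤ n) :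
    Nat.totient n ≤
      eigMult (Aalpha (powerGraph (Multiplicative (ZMod n))) α) (α * (n : ℝ) - 1) := by
  have : Fact (1 < n) := ⟨by omega⟩
  let g : (ZMod n)ˣ → Multiplicative (ZMod n) := fun u => .ofAdd (u : ZMod n)
  have hg : Function.Injective g := fun u w h => Units.ext (Multiplicative.ofAdd.injective h)
  have hg1 : (1 : Multiplicative (ZMod n)) ∉ Set.range g :=
    fun ⟨u, hu⟩ => u.ne_zero (Multiplicative.ofAdd.injective hu)
  have := (powerGraph _).card_le_eigMult_Aalpha α hg (fun u _ => powerGraph_ofAdd_unit_adj u)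
    hg1 (fun _ => powerGraph_one_adj)
  rwa [ZMod.card_units_eq_totient, Fintype.card_multiplicative, ZMod.card] at this

/-- `αn − 1` is an eigenvalue of the power graph of the cyclic group
of order `n ≥ 3` with eigenspace of dimension at least `φ(n)`. -/
theorem stmt_13 {α : ℝ} (hα : α ∈ Set.Icc (0 : ℝ) 1)
    (n : ℕ) [NeZero n] (hn : 3 ≤ n) :
    Nat.totient n ≤
      eigMult (Aalpha (powerGraph (Multiplicative (ZMod n))) α) (α * (n : ℝ) - 1) :=
  stmt_13_general n hn
end

section
/- Let α ∈ [0,1] be a real number, let p be a prime, z a positive integer, and n = p^z. Then the characteristic polynomial of A_α(P(ℤ_n)) equals (x − (n−1)) · (x − (αn−1))^{n−1}; that is, the A_α-spectrum of the power graph of the cyclic group of order n is {n−1, (αn−1) with multiplicity n−1}. -/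
open Matrix Polynomial BigOperators

lemma det_const_lines {K : Type*} [Field K] {V : Type*} [Fintype V] [DecidableEq V]
    [Nonempty V] (d b : K) (hd : d ≠ 0) :
    Matrix.det (d • (1 : Matrix V V K) + b • Matrix.of (fun _ _ => (1 : K))) =
      d ^ (Fintype.card V - 1) * (d + (Fintype.card V : K) * b) := by
  have hM : d • (1 : Matrix V V K) + b • Matrix.of (fun _ _ => (1 : K)) =
      d • (1 + (Matrix.replicateCol Unit (fun _ : V => d⁻¹ * b) : Matrix V Unit K) *
        (Matrix.replicateRow Unit (fun _ : V => 1) : Matrix Unit V K)) := by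
    ext i j
    by_cases h : i = j <;>
      · simp [h, Matrix.mul_apply, Matrix.one_apply, Matrix.smul_apply, Matrix.add_apply,
          Matrix.replicateCol_apply, Matrix.replicateRow_apply, mul_add]
        field_simp
  rw [hM, Matrix.det_smul, Matrix.det_one_add_replicateCol_mul_replicateRow]
  have hcard : 1 ≤ Fintype.card V := Fintype.card_pos
  have hpow : d ^ Fintype.card V = d ^ (Fintype.card V - 1) * d := by
    rw [← pow_succ, Nat.sub_add_cancel hcard]
  rw [hpow]
  simp only [dotProduct, one_mul, Finset.sum_const, Finset.card_univ, nsmul_eq_mul]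
  field_simp

set_option synthInstance.maxHeartbeats 400000 in
lemma det_poly_const_lines {V : Type*} [Fintype V] [DecidableEq V] [Nonempty V] (r s : ℝ) :
    Matrix.det ((X - C r) • (1 : Matrix V V ℝ[X]) + (C s) • Matrix.of (fun _ _ => (1 : ℝ[X]))) =
      (X - C r) ^ (Fintype.card V - 1) * ((X - C r) + (Fintype.card V : ℝ[X]) * C s) := by
  set f : ℝ[X] →+* RatFunc ℝ := algebraMap ℝ[X] (RatFunc ℝ) with hf
  have hinj : Function.Injective f := IsFractionRing.injective ℝ[X] (RatFunc ℝ)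
  apply hinj
  set M : Matrix V V ℝ[X] :=
    (X - C r) • (1 : Matrix V V ℝ[X]) + (C s) • Matrix.of (fun _ _ => (1 : ℝ[X])) with hMdef
  have hmap : M.map f = f (X - C r) • (1 : Matrix V V (RatFunc ℝ)) +
      f (C s) • Matrix.of (fun _ _ => (1 : RatFunc ℝ)) := by
    ext i j
    by_cases h : i = j <;>
      simp [hMdef, h, Matrix.one_apply, Matrix.smul_apply, Matrix.add_apply, Matrix.map_apply]
  have hd : f (X - C r) ≠ 0 := by
    intro hcon
    exact Polynomial.X_sub_C_ne_zero r (hinj (by simpa using hcon))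
  rw [RingHom.map_det, RingHom.mapMatrix_apply, hmap, det_const_lines _ _ hd]
  simp only [_root_.map_mul, map_add, map_sub, map_pow, map_natCast]

lemma charpoly_const_lines {V : Type*} [Fintype V] [DecidableEq V] [Nonempty V] (c e : ℝ) :
    (Matrix.of (fun i j : V => if i = j then c else e)).charpoly =
      (X - C (c + ((Fintype.card V : ℝ) - 1) * e)) * (X - C (c - e)) ^ (Fintype.card V - 1) := by
  have hcm : charmatrix (Matrix.of (fun i j : V => if i = j then c else e)) =
      (X - C (c - e)) • (1 : Matrix V V ℝ[X]) +
        (C (-e)) • Matrix.of (fun _ _ => (1 : ℝ[X])) := by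
    ext i j
    by_cases h : i = j <;>
      simp [h, charmatrix_apply, Matrix.one_apply, Matrix.smul_apply, Matrix.add_apply,
        Matrix.diagonal_apply, map_sub] <;> ring
  rw [Matrix.charpoly, hcm, det_poly_const_lines]
  have hcard : 1 ≤ Fintype.card V := Fintype.card_pos
  have h1 : ((Fintype.card V : ℝ[X])) * C (-e) = C ((Fintype.card V : ℝ) * (-e)) := by
    simp [_root_.map_mul]
  rw [mul_comm]
  congr 1
  rw [h1, sub_add, ← C_sub]
  congr 1
  push_cast
  ring

lemma zmod_smul_of_gcd_dvd {n : ℕ} [NeZero n] (a b : ZMod n)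
    (h : Nat.gcd (ZMod.val a) n ∣ ZMod.val b) : ∃ k : ℕ, 0 < k ∧ b = k • a := by
  have hn : 0 < n := Nat.pos_of_ne_zero (NeZero.ne n)
  set A := ZMod.val a with hA
  set g := Nat.gcd A n with hg
  have hAa : ((A : ℕ) : ZMod n) = a := by
    rw [hA]; simp [ZMod.natCast_val, ZMod.cast_id]
  have hga : (g : ZMod n) = a * (Nat.gcdA A n : ZMod n) := by
    have hb := Nat.gcd_eq_gcd_ab A n
    have h2 : ((g : ℤ) : ZMod n) = ((A * Nat.gcdA A n + n * Nat.gcdB A n : ℤ) : ZMod n) := by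
      rw [← hb]
    push_cast at h2
    rw [hAa, ZMod.natCast_self] at h2
    simpa using h2
  have hb' : b = ((ZMod.val b / g * g : ℕ) : ZMod n) := by
    rw [Nat.div_mul_cancel h]
    simp [ZMod.natCast_val, ZMod.cast_id]
  set m : ℤ := (ZMod.val b / g : ℕ) * Nat.gcdA A n with hm
  have hbm : b = (m : ZMod n) * a := by
    rw [hb', hm]
    have hsplit : ((ZMod.val b / g * g : ℕ) : ZMod n) =
        ((ZMod.val b / g : ℕ) : ZMod n) * (g : ZMod n) := by push_cast; ring
    rw [hsplit, hga, Int.cast_mul, Int.cast_natCast]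
    ring
  refine ⟨(m % n).toNat + n, by omega, ?_⟩
  have hnz : (n : ℤ) ≠ 0 := by exact_mod_cast hn.ne'
  have h0 : (((m % (n : ℤ)).toNat : ℕ) : ZMod n) = ((m % (n : ℤ) : ℤ) : ZMod n) := by
    rw [← Int.cast_natCast, Int.toNat_of_nonneg (Int.emod_nonneg m hnz)]
  have hk : (((m % (n : ℤ)).toNat + n : ℕ) : ZMod n) = (m : ZMod n) := by
    push_cast [h0]
    simp [ZMod.intCast_mod, ZMod.natCast_self]
  rw [nsmul_eq_mul, hk, hbm]

lemma zmod_comparable {p z n : ℕ} (hp : p.Prime) (hn : n = p ^ z) [NeZero n] (a b : ZMod n) :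
    ∃ k : ℕ, 0 < k ∧ (b = k • a ∨ a = k • b) := by
  have h1 : Nat.gcd (ZMod.val a) n ∣ p ^ z := hn ▸ Nat.gcd_dvd_right _ _
  have h2 : Nat.gcd (ZMod.val b) n ∣ p ^ z := hn ▸ Nat.gcd_dvd_right _ _
  obtain ⟨i, hi, hgi⟩ := (Nat.dvd_prime_pow hp).mp h1
  obtain ⟨j, hj, hgj⟩ := (Nat.dvd_prime_pow hp).mp h2
  rcases le_total i j with hij | hij
  · have : Nat.gcd (ZMod.val a) n ∣ ZMod.val b :=
      (hgi ▸ pow_dvd_pow p hij).trans (hgj ▸ Nat.gcd_dvd_left _ _)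
    obtain ⟨k, hk, hkb⟩ := zmod_smul_of_gcd_dvd a b this
    exact ⟨k, hk, Or.inl hkb⟩
  · have : Nat.gcd (ZMod.val b) n ∣ ZMod.val a :=
      (hgj ▸ pow_dvd_pow p hij).trans (hgi ▸ Nat.gcd_dvd_left _ _)
    obtain ⟨k, hk, hkb⟩ := zmod_smul_of_gcd_dvd b a this
    exact ⟨k, hk, Or.inr hkb⟩

lemma powerGraph_eq_top {p z n : ℕ} (hp : p.Prime) (hn : n = p ^ z) [NeZero n] :
    powerGraph (Multiplicative (ZMod n)) = ⊤ := by
  ext x y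
  simp only [powerGraph, SimpleGraph.fromRel_adj, SimpleGraph.top_adj]
  constructor
  · exact fun h => h.1
  · intro hxy
    refine ⟨hxy, ?_⟩
    obtain ⟨k, hk, hor⟩ := zmod_comparable hp hn (Multiplicative.toAdd x) (Multiplicative.toAdd y)
    rcases hor with h | h
    · left; exact ⟨k, hk, by
        apply Multiplicative.toAdd.injective
        simpa using h⟩
    · right; exact ⟨k, hk, by
        apply Multiplicative.toAdd.injective
        simpa using h⟩

/-- the `A_α`-characteristic polynomial of the power graph of the
cyclic group of prime power order `n = p^z`. -/
theorem stmt_14 {α : ℝ} (hα : α ∈ Set.Icc (0 : ℝ) 1)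
    (p z n : ℕ) (hp : p.Prime) (hz : 1 ≤ z) (hn : n = p ^ z) [NeZero n] :
    (Aalpha (powerGraph (Multiplicative (ZMod n))) α).charpoly =
      (X - C ((n : ℝ) - 1)) * (X - C (α * (n : ℝ) - 1)) ^ (n - 1) := by
  classical
  have hne : n ≠ 0 := NeZero.ne n
  have hn1 : 1 ≤ n := Nat.one_le_iff_ne_zero.mpr hne
  rw [powerGraph_eq_top hp hn]
  have hcard : Fintype.card (Multiplicative (ZMod n)) = n := by
    simp [ZMod.card]
  have hnonempty : Nonempty (Multiplicative (ZMod n)) := by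
    have : 0 < Fintype.card (Multiplicative (ZMod n)) := by omega
    exact Fintype.card_pos_iff.mp this
  have hAa : Aalpha (⊤ : SimpleGraph (Multiplicative (ZMod n))) α =
      Matrix.of (fun i j => if i = j then α * ((n : ℝ) - 1) else (1 - α)) := by
    ext i j
    show α * _ + (1 - α) * _ = _
    by_cases h : i = j
    · subst h
      have hdeg : ((⊤ : SimpleGraph (Multiplicative (ZMod n))).degree i : ℝ) = (n : ℝ) - 1 := by
        have := SimpleGraph.complete_graph_degree (V := Multiplicative (ZMod n)) i
        have h2 : (⊤ : SimpleGraph (Multiplicative (ZMod n))).degree i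
            = Fintype.card (Multiplicative (ZMod n)) - 1 := by
          convert this using 2 <;> exact Subsingleton.elim _ _
        rw [h2, hcard, Nat.cast_sub hn1, Nat.cast_one]
      simp [Matrix.diagonal_apply, SimpleGraph.adjMatrix_apply]
      exact Or.inl (by convert hdeg using 3 <;> exact Subsingleton.elim _ _)
    · simp [h, Matrix.diagonal_apply, SimpleGraph.adjMatrix_apply, Ne.symm h]
  rw [hAa, charpoly_const_lines, hcard]
  have e1 : α * ((n : ℝ) - 1) + ((n : ℝ) - 1) * (1 - α) = (n : ℝ) - 1 := by ring
  have e2 : α * ((n : ℝ) - 1) - (1 - α) = α * (n : ℝ) - 1 := by ring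
  rw [e1, e2]
end

section
/- Let α ∈ [0,1] be a real number and let n = pq, where p < q are primes. Then for the power graph P(ℤ_n) of the cyclic group of order n: (i) αn − 1 is an eigenvalue of A_α(P(ℤ_n)) whose eigenspace has dimension at least φ(n); (ii) α(φ(n) + φ(p) + 1) − 1 is an eigenvalue whose eigenspace has dimension at least φ(p) − 1; (iii) α(φ(n) + φ(q) + 1) − 1 is an eigenvalue whose eigenspace has dimension at least φ(q) − 1. Here φ is Euler's totient function. -/
/-!
If `x` and `y` are adjacent and have the same neighbours otherwise (true twins), then
`e_x - e_y` is an eigenvector of `A_α` for the eigenvalue `α (deg x + 1) - 1`; a set of `k`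
pairwise true twins of common degree `d` therefore gives `k - 1` independent eigenvectors for
`α (d + 1) - 1`. In the power graph of a finite cyclic group two distinct elements are adjacent
exactly when one of their orders divides the other. Hence elements of equal order are true twins,
and the identity together with the `φ(n)` generators are universal vertices, of degree `n - 1`.
For `n = pq`, an element of order `p` is adjacent to everything except itself and the `φ(q)`
elements of order `q`, so `φ(n) + φ(p) + φ(q) + 1 = n` gives it degree `φ(n) + φ(p)`.
-/

open Matrix Polynomial BigOperators

open Finset
open scoped Nat

lemma linearIndependent_single_sub_single_s15 {V : Type*} [DecidableEq V] (x₀ : V) (s : Set V)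
    (hs : x₀ ∉ s) :
    LinearIndependent ℝ (fun y : s => (Pi.single x₀ 1 - Pi.single (y : V) 1 : V → ℝ)) := by
  rw [linearIndependent_iff']
  intro t g hg j hj
  have hj₀ : (j : V) ≠ x₀ := fun h => hs (h ▸ j.2)
  simpa [Finset.sum_apply, Pi.single_apply, hj₀, hj, Subtype.coe_inj] using congrFun hg j

lemma card_sub_one_le_eigMult {V : Type*} [Fintype V] [DecidableEq V] (M : Matrix V V ℝ)
    (μ : ℝ) {C : Finset V} {x₀ : V} (hx₀ : x₀ ∈ C)
    (hM : ∀ y ∈ C, y ≠ x₀ →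
      M *ᵥ (Pi.single x₀ 1 - Pi.single y 1) = μ • (Pi.single x₀ 1 - Pi.single y 1)) :
    #C - 1 ≤ eigMult M μ := by
  let v : ↥(C.erase x₀ : Set V) → V → ℝ := fun y => Pi.single x₀ 1 - Pi.single (y : V) 1
  have hv : LinearIndependent ℝ v := linearIndependent_single_sub_single_s15 x₀ _ (by simp)
  unfold eigMult
  refine le_of_eq_of_le ?_
    (Submodule.finrank_mono (Submodule.span_le (s := Set.range v).mpr ?_))
  · simp only [finrank_span_eq_card hv, Finset.coe_sort_coe, Fintype.card_coe,
      Finset.card_erase_of_mem hx₀]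
  · rintro _ ⟨⟨y, hy⟩, rfl⟩
    obtain ⟨hyx₀, hyC⟩ := Finset.mem_erase.mp hy
    exact Module.End.mem_eigenspace_iff.mpr (hM y hyC hyx₀)

lemma Aalpha_apply {V : Type*} [Fintype V] [DecidableEq V] (G : SimpleGraph V)
    [DecidableRel G.Adj] (α : ℝ) (u v : V) :
    Aalpha G α u v = α * (if u = v then (gdegree G u : ℝ) else 0)
      + (1 - α) * (if G.Adj u v then 1 else 0) := by
  unfold Aalpha gdegree
  simp only [Matrix.add_apply, Matrix.smul_apply, diagonal_apply, SimpleGraph.adjMatrix_apply,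
    smul_eq_mul]
  congr

namespace SimpleGraph

variable {V : Type*}

def IsTrueTwin (G : SimpleGraph V) (x y : V) : Prop :=
  G.Adj x y ∧ ∀ w, w ≠ x → w ≠ y → (G.Adj w x ↔ G.Adj w y)

lemma IsTrueTwin.of_isUniversal {G : SimpleGraph V} {x y : V} (hxy : x ≠ y)
    (hx : G.IsUniversal x) (hy : G.IsUniversal y) : G.IsTrueTwin x y :=
  ⟨hx hxy, fun _ hwx hwy => ⟨fun _ => (hy hwy.symm).symm, fun _ => (hx hwx.symm).symm⟩⟩

variable [Fintype V]

lemma gdegree_eq_card_filter (G : SimpleGraph V) [DecidableRel G.Adj] (v : V) :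
    gdegree G v = #{w | G.Adj v w} := by
  classical
  unfold gdegree
  rw [← card_neighborFinset_eq_degree, neighborFinset_eq_filter]
  congr

lemma gdegree_add_gdegree_compl (G : SimpleGraph V) (v : V) :
    gdegree G v + gdegree Gᶜ v + 1 = Fintype.card V := by
  classical
  unfold gdegree
  have := G.degree_lt_card_verts v
  rw [degree_compl]
  omega

lemma IsUniversal.gdegree_eq {G : SimpleGraph V} {v : V} (h : G.IsUniversal v) :
    gdegree G v = Fintype.card V - 1 := by
  classical
  exact (G.degree_eq_card_sub_one v).mpr h

lemma IsTrueTwin.gdegree_eq {G : SimpleGraph V} {x y : V} (h : G.IsTrueTwin x y) :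
    gdegree G x = gdegree G y := by
  classical
  unfold gdegree
  rw [← card_neighborFinset_eq_degree, ← card_neighborFinset_eq_degree,
    ← card_map (Equiv.swap x y).toEmbedding]
  congr 1
  ext w
  simp only [mem_map_equiv, Equiv.symm_swap, mem_neighborFinset]
  rcases eq_or_ne w x with rfl | hwx
  · simp [Equiv.swap_apply_left, h.1, h.1.symm]
  rcases eq_or_ne w y with rfl | hwy
  · simp
  rw [Equiv.swap_apply_of_ne_of_ne hwx hwy, adj_comm, G.adj_comm y]
  exact h.2 w hwx hwy

lemma IsTrueTwin.Aalpha_mulVec [DecidableEq V] {G : SimpleGraph V} {x y : V} (h : G.IsTrueTwin x y)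
    (α : ℝ) :
    Aalpha G α *ᵥ (Pi.single x 1 - Pi.single y 1)
      = (α * (gdegree G x + 1) - 1) • (Pi.single x 1 - Pi.single y 1) := by
  classical
  have hxy : x ≠ y := h.1.ne
  ext w
  simp only [mulVec_sub, mulVec_single_one, Pi.sub_apply, col_apply, Pi.smul_apply, smul_eq_mul,
    Aalpha_apply]
  rcases eq_or_ne w x with rfl | hwx
  · simp [hxy, h.1]
    ring
  rcases eq_or_ne w y with rfl | hwy
  · simp [hwx, h.1.symm, h.gdegree_eq]
    ring
  simp [hwx, hwy, h.2 w hwx hwy]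

lemma card_sub_one_le_eigMult_Aalpha (G : SimpleGraph V) (α : ℝ) {C : Finset V}
    (hC : (C : Set V).Pairwise G.IsTrueTwin) {d : ℕ} (hd : ∀ x ∈ C, gdegree G x = d) :
    #C - 1 ≤ eigMult (Aalpha G α) (α * (d + 1) - 1) := by
  classical
  rcases C.eq_empty_or_nonempty with rfl | ⟨x₀, hx₀⟩
  · simp
  refine card_sub_one_le_eigMult _ _ hx₀ fun y hy hyx₀ => ?_
  rw [← hd x₀ hx₀]
  exact (hC hx₀ hy hyx₀.symm).Aalpha_mulVec α

end SimpleGraph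

lemma Nat.Prime.eq_of_dvd_mul_of_not_dvd {p q t : ℕ} (hp : p.Prime) (hq : q.Prime)
    (ht : t ∣ p * q) (htp : ¬t ∣ p) (hpt : ¬p ∣ t) : t = q := by
  have htq : t ∣ q := ((hp.coprime_iff_not_dvd.mpr hpt).symm.dvd_mul_left).mp ht
  exact (hq.eq_one_or_self_of_dvd t htq).resolve_left fun h => htp (h ▸ one_dvd p)

lemma Nat.totient_mul_add_totient_add_totient_add_one {p q : ℕ} (hp : p.Prime) (hq : q.Prime)
    (hpq : p ≠ q) : φ (p * q) + φ p + φ q + 1 = p * q := by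
  rw [Nat.totient_mul ((Nat.coprime_primes hp hq).mpr hpq), Nat.totient_prime hp,
    Nat.totient_prime hq]
  obtain ⟨a, rfl⟩ : ∃ a, p = a + 1 := ⟨p - 1, by have := hp.pos; omega⟩
  obtain ⟨b, rfl⟩ : ∃ b, q = b + 1 := ⟨q - 1, by have := hq.pos; omega⟩
  simp only [add_tsub_cancel_right]
  ring

section FiniteGroup

variable {G : Type*} [Group G] [Finite G]

lemma exists_pos_pow_eq_iff_mem_zpowers {x y : G} :
    (∃ k : ℕ, 0 < k ∧ y = x ^ k) ↔ y ∈ Subgroup.zpowers x := by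
  refine ⟨fun ⟨k, _, hk⟩ => hk ▸ Subgroup.npow_mem_zpowers x k, fun h => ?_⟩
  obtain ⟨k, rfl⟩ := mem_powers_iff_mem_zpowers.mpr h
  rcases k.eq_zero_or_pos with rfl | hk
  · exact ⟨orderOf x, orderOf_pos x, by simp [pow_orderOf_eq_one]⟩
  · exact ⟨k, hk, rfl⟩

lemma powerGraph_isUniversal_one : (powerGraph G).IsUniversal 1 := fun _ hw =>
  (SimpleGraph.fromRel_adj _ _ _).mpr
    ⟨hw, Or.inr (exists_pos_pow_eq_iff_mem_zpowers.mpr (Subgroup.one_mem _))⟩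

variable [IsCyclic G]

lemma IsCyclic.mem_zpowers_iff_orderOf_dvd {x y : G} :
    y ∈ Subgroup.zpowers x ↔ orderOf y ∣ orderOf x := by
  classical
  have := Fintype.ofFinite G
  refine ⟨orderOf_dvd_of_mem_zpowers, fun h => ?_⟩
  let roots : Finset G := {a | a ^ orderOf x = 1}
  have hsub : (Subgroup.zpowers x : Set G).toFinset ⊆ roots := by
    intro a ha
    simpa [roots, ← orderOf_dvd_iff_pow_eq_one] using
      orderOf_dvd_of_mem_zpowers (Set.mem_toFinset.mp ha)
  -- a cyclic group has at most `m` solutions of `a ^ m = 1`, and `zpowers x` already has `m`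
  have heq : (Subgroup.zpowers x : Set G).toFinset = roots :=
    Finset.eq_of_subset_of_card_le hsub <| by
      rw [Set.toFinset_card, ← Nat.card_eq_fintype_card, SetLike.coe_sort_coe, Nat.card_zpowers]
      exact IsCyclic.card_pow_eq_one_le (orderOf_pos x)
  have hy : y ∈ roots := by simpa [roots] using orderOf_dvd_iff_pow_eq_one.mp h
  rw [← heq, Set.mem_toFinset] at hy
  exact hy

lemma powerGraph_adj_iff {x y : G} :
    (powerGraph G).Adj x y ↔
      x ≠ y ∧ (orderOf y ∣ orderOf x ∨ orderOf x ∣ orderOf y) := by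
  simp only [powerGraph, SimpleGraph.fromRel_adj, exists_pos_pow_eq_iff_mem_zpowers,
    IsCyclic.mem_zpowers_iff_orderOf_dvd]

lemma powerGraph_compl_adj_iff {x y : G} :
    (powerGraph G)ᶜ.Adj x y ↔ ¬(orderOf y ∣ orderOf x ∨ orderOf x ∣ orderOf y) := by
  rw [SimpleGraph.compl_adj, powerGraph_adj_iff]
  refine ⟨by tauto, fun h => ⟨fun hxy => h (Or.inl (hxy ▸ dvd_rfl)), fun h' => h h'.2⟩⟩

lemma powerGraph_isUniversal_of_orderOf_eq_natCard {x : G} (hx : orderOf x = Nat.card G) :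
    (powerGraph G).IsUniversal x := fun w hw =>
  powerGraph_adj_iff.mpr ⟨hw, Or.inl (hx ▸ orderOf_dvd_natCard w)⟩

lemma powerGraph_isTrueTwin_of_orderOf_eq {x y : G} (hxy : x ≠ y) (h : orderOf x = orderOf y) :
    (powerGraph G).IsTrueTwin x y :=
  ⟨powerGraph_adj_iff.mpr ⟨hxy, Or.inl (h ▸ dvd_rfl)⟩, fun _ hwx hwy => by
    simp only [powerGraph_adj_iff, h, ne_eq, hwx, hwy, not_false_eq_true, true_and]⟩

end FiniteGroup

section FintypeGroup

variable {G : Type*} [Group G] [Fintype G] [IsCyclic G]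

lemma gdegree_powerGraph_of_orderOf_eq {p q : ℕ} (hp : p.Prime) (hq : q.Prime) (hpq : p ≠ q)
    (hG : Fintype.card G = p * q) {x : G} (hx : orderOf x = p) :
    gdegree (powerGraph G) x = φ (p * q) + φ p := by
  classical
  have hcompl : gdegree (powerGraph G)ᶜ x = φ q := by
    rw [SimpleGraph.gdegree_eq_card_filter,
      ← IsCyclic.card_orderOf_eq_totient (hG ▸ dvd_mul_left q p)]
    congr 1
    ext w
    simp only [mem_filter, mem_univ, true_and, powerGraph_compl_adj_iff, hx, not_or]
    refine ⟨fun h => hp.eq_of_dvd_mul_of_not_dvd hq (hG ▸ orderOf_dvd_card) h.1 h.2,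
      fun h => h ▸ ⟨fun hqp => hpq ?_, fun hpq' => hpq ?_⟩⟩
    · exact ((Nat.prime_dvd_prime_iff_eq hq hp).mp hqp).symm
    · exact (Nat.prime_dvd_prime_iff_eq hp hq).mp hpq'
  have := (powerGraph G).gdegree_add_gdegree_compl x
  have := Nat.totient_mul_add_totient_add_totient_add_one hp hq hpq
  omega

theorem totient_card_le_eigMult_Aalpha_powerGraph [Nontrivial G] (α : ℝ) :
    φ (Fintype.card G) ≤ eigMult (Aalpha (powerGraph G) α) (α * Fintype.card G - 1) := by
  classical
  let C : Finset G := insert 1 ({x | orderOf x = Fintype.card G} : Finset G)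
  have hC : ∀ x ∈ C, (powerGraph G).IsUniversal x := by
    intro x hx
    rcases mem_insert.mp hx with rfl | hx
    · exact powerGraph_isUniversal_one
    · exact powerGraph_isUniversal_of_orderOf_eq_natCard <| by
        rw [Nat.card_eq_fintype_card]; simpa using hx
  have hcard : #C - 1 = φ (Fintype.card G) := by
    rw [card_insert_of_notMem (by simpa using Fintype.one_lt_card.ne),
      IsCyclic.card_orderOf_eq_totient dvd_rfl, add_tsub_cancel_right]
  have := (powerGraph G).card_sub_one_le_eigMult_Aalpha α
    (fun x hx y hy hxy => .of_isUniversal hxy (hC x hx) (hC y hy)) fun x hx => (hC x hx).gdegree_eq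
  rwa [hcard, Nat.cast_pred Fintype.card_pos, sub_add_cancel] at this

theorem totient_sub_one_le_eigMult_Aalpha_powerGraph {p q : ℕ} (hp : p.Prime) (hq : q.Prime)
    (hpq : p ≠ q) (hG : Fintype.card G = p * q) (α : ℝ) :
    φ p - 1 ≤ eigMult (Aalpha (powerGraph G) α) (α * (φ (p * q) + φ p + 1) - 1) := by
  classical
  have := (powerGraph G).card_sub_one_le_eigMult_Aalpha α (C := {x | orderOf x = p})
    (fun x hx y hy hxy => powerGraph_isTrueTwin_of_orderOf_eq hxy <| by
      rw [(mem_filter_univ x).mp hx, (mem_filter_univ y).mp hy])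
    fun x hx => gdegree_powerGraph_of_orderOf_eq hp hq hpq hG (by simpa using hx)
  rwa [IsCyclic.card_orderOf_eq_totient (hG ▸ dvd_mul_right p q), Nat.cast_add] at this

end FintypeGroup

theorem stmt_15_general {α : ℝ}
    (p q n : ℕ) (hp : p.Prime) (hq : q.Prime) (hpq : p < q) (hn : n = p * q) [NeZero n] :
    Nat.totient n ≤
      eigMult (Aalpha (powerGraph (Multiplicative (ZMod n))) α) (α * (n : ℝ) - 1) ∧
    Nat.totient p - 1 ≤
      eigMult (Aalpha (powerGraph (Multiplicative (ZMod n))) α)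
        (α * ((Nat.totient n : ℝ) + (Nat.totient p : ℝ) + 1) - 1) ∧
    Nat.totient q - 1 ≤
      eigMult (Aalpha (powerGraph (Multiplicative (ZMod n))) α)
        (α * ((Nat.totient n : ℝ) + (Nat.totient q : ℝ) + 1) - 1) := by
  have hcard : Fintype.card (Multiplicative (ZMod n)) = n := by simp
  have : Nontrivial (Multiplicative (ZMod n)) :=
    Fintype.one_lt_card_iff_nontrivial.mp <| by
      rw [hcard, hn]
      exact one_lt_mul'' hp.one_lt hq.one_lt
  refine ⟨?_, ?_, ?_⟩
  · simpa only [hcard] using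
      totient_card_le_eigMult_Aalpha_powerGraph (G := Multiplicative (ZMod n)) α
  · subst hn
    exact totient_sub_one_le_eigMult_Aalpha_powerGraph hp hq hpq.ne hcard α
  · subst hn
    simpa only [mul_comm q p] using
      totient_sub_one_le_eigMult_Aalpha_powerGraph hq hp hpq.ne' (hcard.trans (mul_comm p q)) α

/-- eigenvalues of the power graph of the cyclic group of order
`n = pq`, `p < q` primes. -/
theorem stmt_15 {α : ℝ} (hα : α ∈ Set.Icc (0 : ℝ) 1)
    (p q n : ℕ) (hp : p.Prime) (hq : q.Prime) (hpq : p < q) (hn : n = p * q) [NeZero n] :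
    Nat.totient n ≤
      eigMult (Aalpha (powerGraph (Multiplicative (ZMod n))) α) (α * (n : ℝ) - 1) ∧
    Nat.totient p - 1 ≤
      eigMult (Aalpha (powerGraph (Multiplicative (ZMod n))) α)
        (α * ((Nat.totient n : ℝ) + (Nat.totient p : ℝ) + 1) - 1) ∧
    Nat.totient q - 1 ≤
      eigMult (Aalpha (powerGraph (Multiplicative (ZMod n))) α)
        (α * ((Nat.totient n : ℝ) + (Nat.totient q : ℝ) + 1) - 1) :=
  stmt_15_general p q n hp hq hpq hn
end
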